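/- arXiv:math/0212042 — 4 statements merged into one kernel-verified Lean document; each statement's English description precedes it below -/
import Mathlib

section
/- Adam has a winning strategy in the game G₀(A) if and only if there exists a tree T ∈ Q₀ such that [T] ⊆ A. -/
/-- The finite initial segment of `x` of length `n`, as a list. -/
def res (x : ℕ → ℕ) (n : ℕ) : List ℕ := (List.range n).map x

/-- A (nonempty, initial-segment-closed) tree of finite sequences of naturals. -/
def IsTree (T : Set (List ℕ)) : Prop :=
  T.Nonempty ∧ ∀ t ∈ T, ∀ s, s <+: t → s ∈ T

/-- The set of infinite branches of a tree. -/
def branches (T : Set (List ℕ)) : Set (ℕ → ℕ) := {x | ∀ n, res x n ∈ T}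

/-- The set of (values of) immediate successors of `t` in `T`. -/
def succs (T : Set (List ℕ)) (t : List ℕ) : Set ℕ := {a | t ++ [a] ∈ T}

/-- The poset `Q₀`: every node extends to nodes of arbitrarily large norm. -/
def Q0 (norm : List ℕ → Set ℕ → ℝ) (T : Set (List ℕ)) : Prop :=
  IsTree T ∧ ∀ n : ℕ, ∀ s ∈ T, ∃ t ∈ T, s <+: t ∧ (n : ℝ) < norm t (succs T t)

/-- `t` is an initial segment of the infinite sequence `x`. -/
def prefixOf (t : List ℕ) (x : ℕ → ℕ) : Prop := t = res x t.length

/-- Adam's move: a candidate one-step extension value together with the further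
(arbitrary) extension to be used in case Eve accepts the candidate. -/
abbrev AMove : Type := ℕ × List ℕ

/-- State of the game `G₀`: the current node `tₙ`, the current stage `n`, and the set of
candidate one-step extension values Adam has offered so far at the current stage. -/
structure GState where
  node : List ℕ
  stage : ℕ
  cands : Set ℕ

/-- One round of `G₀`: Adam offers candidate `m.1` (with prospective tail `m.2`),
Eve accepts (`b = true`) or rejects. -/
def step (s : GState) (m : AMove) (b : Bool) : GState :=
  if b then ⟨s.node ++ m.1 :: m.2, s.stage + 1, ∅⟩
  else ⟨s.node, s.stage, s.cands ∪ {m.1}⟩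

/-- The state before round `k` of the play `(a, e)`; round `0` is special: Adam announces
the initial node `t₀` (as the tail component of his move, Eve's reply being ignored). -/
def gstate (a : ℕ → AMove) (e : ℕ → Bool) : ℕ → GState
  | 0 => ⟨[], 0, ∅⟩
  | 1 => ⟨(a 0).2, 0, ∅⟩
  | k + 2 => step (gstate a e (k + 1)) (a (k + 1)) (e (k + 1))

/-- Adam wins the play `(a, e)` of `G₀(A)` iff either from some round on Eve never accepts
and the creature Adam builds at that eternal stage `n` has norm `≥ n`, or else all stages are
completed and the resulting real belongs to `A`. -/
def AdamWins (norm : List ℕ → Set ℕ → ℝ) (A : Set (ℕ → ℕ))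
    (a : ℕ → AMove) (e : ℕ → Bool) : Prop :=
  (∃ k₀, 1 ≤ k₀ ∧ (∀ k, k₀ ≤ k → (gstate a e k).stage = (gstate a e k₀).stage) ∧
    ((gstate a e k₀).stage : ℝ) ≤
      norm (gstate a e k₀).node {c | ∃ k, k₀ ≤ k ∧ c ∈ (gstate a e k).cands}) ∨
  ((∀ n : ℕ, ∃ k, n ≤ (gstate a e k).stage) ∧ ∃ x ∈ A, ∀ k, prefixOf (gstate a e k).node x)

/-- Histories of the game: the sequence of (Adam move, Eve reply) pairs so far. -/
abbrev History := List (AMove × Bool)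

/-- The history of the first `k` rounds of the play `(a, e)`. -/
def hist (a : ℕ → AMove) (e : ℕ → Bool) (k : ℕ) : History :=
  (List.range k).map fun i => (a i, e i)

/-- The play `(a, e)` follows Adam's strategy `σ`. -/
def FollowsA (σ : History → AMove) (a : ℕ → AMove) (e : ℕ → Bool) : Prop :=
  ∀ k, a k = σ (hist a e k)

/-- The play `(a, e)` follows Eve's strategy `τ`. -/
def FollowsE (τ : History → AMove → Bool) (a : ℕ → AMove) (e : ℕ → Bool) : Prop :=
  ∀ k, e k = τ (hist a e k) (a k)

/-! If `T ∈ Q₀` and `[T] ⊆ A`, Adam keeps the current node in `T` with norm above the stage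
number, and within a stage offers every successor of the node infinitely often: if Eve eventually
rejects forever, his creature is the whole successor set, whose norm is large enough; otherwise the
nodes converge to a branch of `T`.

Conversely, let `σ` be winning for Adam. Consider the plays against `σ` in which Eve, at each
stage, rejects until Adam first offers some value `c` and then accepts it; their nodes form a tree.
Were Eve to reject forever from such a position, `σ` would have to win by norm, so the candidates
Adam would offer, all of them successors in the tree, have norm at least the current stage, and the
stage can be made arbitrarily large: the tree is in `Q₀`. Along a branch `x` of the tree these plays cohere
into a single play against `σ`, whose resulting real is `x`, hence `x ∈ A`. -/

open Relation

lemma length_res (x : ℕ → ℕ) (n : ℕ) : (res x n).length = n := by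
  simp [res]

@[simp]
lemma getElem_res (x : ℕ → ℕ) (n i : ℕ) (hi : i < (res x n).length) : (res x n)[i] = x i := by
  simp [res]

lemma res_prefix_res (x : ℕ → ℕ) {m n : ℕ} (h : m ≤ n) : res x m <+: res x n := by
  simpa [res, ← List.map_take, List.take_range, min_eq_left h] using List.take_prefix m (res x n)

lemma prefixOf_iff {t : List ℕ} {x : ℕ → ℕ} :
    prefixOf t x ↔ ∀ i (hi : i < t.length), t[i] = x i := by
  refine ⟨fun h i hi => ?_, fun h => List.ext_getElem (length_res x _).symm fun i h₁ _ => ?_⟩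
  · simp only [List.getElem_of_eq h, getElem_res]
  · simp [h i h₁]

lemma prefixOf.res_prefix {t : List ℕ} {x : ℕ → ℕ} (h : prefixOf t x) {n : ℕ}
    (hn : n ≤ t.length) : res x n <+: t := by
  rw [h]
  exact res_prefix_res x hn

lemma exists_getElem_eq_of_prefix_chain {α : Type*} (u : ℕ → List α)
    (hstep : ∀ k, u k <+: u (k + 1)) (hlen : ∀ n, ∃ k, n < (u k).length) :
    ∃ x : ℕ → α, ∀ k i (hi : i < (u k).length), (u k)[i] = x i := by
  choose K hK using hlen
  have hmono {j k : ℕ} (h : j ≤ k) : u j <+: u k :=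
    Nat.rel_of_forall_rel_succ_of_le List.IsPrefix hstep h
  refine ⟨fun i => (u (K i))[i]'(hK i), fun k i hi => ?_⟩
  exact ((hmono (le_max_left k (K i))).getElem hi).trans
    ((hmono (le_max_right k (K i))).getElem (hK i)).symm

section Play

variable (a : ℕ → AMove) (e : ℕ → Bool)

lemma gstate_succ {k : ℕ} (hk : 1 ≤ k) :
    gstate a e (k + 1) = step (gstate a e k) (a k) (e k) := by
  obtain ⟨j, rfl⟩ := Nat.exists_eq_add_of_le' hk
  rfl

lemma gstate_succ_of_accept {k : ℕ} (hk : 1 ≤ k) (he : e k = true) :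
    gstate a e (k + 1) =
      ⟨(gstate a e k).node ++ (a k).1 :: (a k).2, (gstate a e k).stage + 1, ∅⟩ := by
  rw [gstate_succ a e hk, he]
  rfl

lemma gstate_succ_of_reject {k : ℕ} (hk : 1 ≤ k) (he : e k = false) :
    gstate a e (k + 1) =
      ⟨(gstate a e k).node, (gstate a e k).stage, (gstate a e k).cands ∪ {(a k).1}⟩ := by
  rw [gstate_succ a e hk, he]
  rfl

lemma node_prefix_node_succ (k : ℕ) : (gstate a e k).node <+: (gstate a e (k + 1)).node := by
  rcases Nat.eq_zero_or_pos k with rfl | hk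
  · exact List.nil_prefix
  cases he : e k
  · rw [gstate_succ_of_reject a e hk he]
  · rw [gstate_succ_of_accept a e hk he]
    exact List.prefix_append _ _

lemma stage_mono : Monotone fun k => (gstate a e k).stage := by
  refine monotone_nat_of_le_succ fun k => ?_
  rcases Nat.eq_zero_or_pos k with rfl | hk
  · exact Nat.zero_le _
  cases he : e k
  · rw [gstate_succ_of_reject a e hk he]
  · rw [gstate_succ_of_accept a e hk he]
    exact Nat.le_succ _

lemma stage_le_length_node (k : ℕ) : (gstate a e k).stage ≤ (gstate a e k).node.length := by
  rcases Nat.eq_zero_or_pos k with rfl | hk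
  · exact le_rfl
  induction k, hk using Nat.le_induction with
  | base => exact Nat.zero_le _
  | succ k hk ih =>
    cases he : e k
    · rwa [gstate_succ_of_reject a e hk he]
    · rw [gstate_succ_of_accept a e hk he]
      simp only [List.length_append, List.length_cons]
      omega

lemma cands_nonempty_of_stage_eq {k : ℕ} (hk : 1 ≤ k)
    (h : (gstate a e (k + 1)).stage = (gstate a e k).stage) :
    (gstate a e (k + 1)).cands.Nonempty := by
  cases he : e k
  · rw [gstate_succ_of_reject a e hk he]
    exact ⟨(a k).1, Or.inr rfl⟩
  · rw [gstate_succ_of_accept a e hk he] at h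
    exact absurd h (Nat.succ_ne_self _)

lemma gstate_of_rejects {K : ℕ} (hK : 1 ≤ K) (he : ∀ k, K ≤ k → e k = false) {k : ℕ}
    (hk : K ≤ k) :
    (gstate a e k).node = (gstate a e K).node ∧ (gstate a e k).stage = (gstate a e K).stage ∧
      (gstate a e k).cands ⊆ (gstate a e K).cands ∪ {c | ∃ i, K ≤ i ∧ (a i).1 = c} := by
  induction k, hk using Nat.le_induction with
  | base => exact ⟨rfl, rfl, Set.subset_union_left⟩
  | succ k hk ih =>
    obtain ⟨hnode, hstage, hcands⟩ := ih
    rw [gstate_succ_of_reject a e (hK.trans hk) (he k hk)]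
    refine ⟨hnode, hstage, Set.union_subset hcands ?_⟩
    rintro _ rfl
    exact Or.inr ⟨k, hk, rfl⟩

lemma not_stage_unbounded_of_const {k₀ : ℕ}
    (h : ∀ k, k₀ ≤ k → (gstate a e k).stage = (gstate a e k₀).stage) :
    ¬ ∀ n, ∃ k, n ≤ (gstate a e k).stage := by
  intro hunb
  obtain ⟨k, hk⟩ := hunb ((gstate a e k₀).stage + 1)
  have h₁ : (gstate a e k).stage ≤ (gstate a e (max k k₀)).stage :=
    stage_mono a e (le_max_left k k₀)
  have h₂ := h _ (le_max_right k k₀)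
  omega

lemma stage_unbounded_or_eventually_rejects :
    (∀ n, ∃ k, n ≤ (gstate a e k).stage) ∨ ∃ K, 1 ≤ K ∧ ∀ k, K ≤ k → e k = false := by
  refine or_iff_not_imp_right.2 fun h n => ?_
  push Not at h
  induction n with
  | zero => exact ⟨0, Nat.zero_le _⟩
  | succ n ih =>
    obtain ⟨k, hk⟩ := ih
    obtain ⟨j, hkj, hj⟩ := h (k + 1) (Nat.le_add_left 1 k)
    refine ⟨j + 1, ?_⟩
    rw [gstate_succ_of_accept a e (by omega) (by simpa using hj)]
    have : (gstate a e k).stage ≤ (gstate a e j).stage := stage_mono a e (by omega)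
    exact Nat.succ_le_succ (hk.trans this)

lemma gstate_congr {a' : ℕ → AMove} {e' : ℕ → Bool} :
    ∀ {k}, (∀ i < k, a i = a' i) → (∀ i < k, e i = e' i) → gstate a e k = gstate a' e' k
  | 0, _, _ => rfl
  | 1, ha, _ => by rw [gstate, gstate, ha 0 Nat.one_pos]
  | k + 2, ha, he => by
    rw [gstate, gstate, gstate_congr (fun i hi => ha i (by omega)) (fun i hi => he i (by omega)),
      ha (k + 1) (by omega), he (k + 1) (by omega)]

end Play

def histState (h : History) : GState :=
  gstate (fun i => (h.getD i default).1) (fun i => (h.getD i default).2) h.length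

lemma histState_hist (a : ℕ → AMove) (e : ℕ → Bool) (k : ℕ) :
    histState (hist a e k) = gstate a e k := by
  have hlen : (hist a e k).length = k := by simp [hist]
  rw [histState, hlen]
  exact gstate_congr _ _ (fun i hi => by simp [hist, hi]) (fun i hi => by simp [hist, hi])

lemma AdamWins.exists_mem_of_stage_unbounded {norm : List ℕ → Set ℕ → ℝ} {A : Set (ℕ → ℕ)}
    {a : ℕ → AMove} {e : ℕ → Bool} (hw : AdamWins norm A a e)
    (hunb : ∀ n, ∃ k, n ≤ (gstate a e k).stage) :
    ∃ x ∈ A, ∀ k, prefixOf (gstate a e k).node x :=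
  (hw.resolve_left fun ⟨_, _, hconst, _⟩ => not_stage_unbounded_of_const a e hconst hunb).2

section TreeStrategy

variable {norm : List ℕ → Set ℕ → ℝ} {T : Set (List ℕ)}

lemma IsTree.nil_mem (hT : IsTree T) : [] ∈ T :=
  let ⟨t, ht⟩ := hT.1
  hT.2 t ht [] List.nil_prefix

lemma Q0.succs_nonempty (hQ : Q0 norm T) {s : List ℕ} (hs : s ∈ T) : (succs T s).Nonempty := by
  obtain ⟨n, hn⟩ := exists_nat_gt (norm s (succs T s))
  obtain ⟨t, ht, ⟨r, rfl⟩, hnt⟩ := hQ.2 n s hs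
  cases r with
  | nil => simp only [List.append_nil] at hnt; linarith
  | cons c r => exact ⟨c, hQ.1.2 _ ht _ ⟨r, by simp⟩⟩

structure Q0Choice (norm : List ℕ → Set ℕ → ℝ) (T : Set (List ℕ)) where
  ext : ℕ → List ℕ → List ℕ
  enum : List ℕ → ℕ → ℕ
  ext_spec : ∀ (n : ℕ) s, s ∈ T →
    ext n s ∈ T ∧ s <+: ext n s ∧ (n : ℝ) < norm (ext n s) (succs T (ext n s))
  succs_eq_range : ∀ s, s ∈ T → succs T s = Set.range (enum s)

lemma Q0.nonempty_choice (hQ : Q0 norm T) : Nonempty (Q0Choice norm T) := by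
  choose! ext hext using hQ.2
  choose! enum henum using fun s (hs : s ∈ T) =>
    (Set.to_countable (succs T s)).exists_eq_range (hQ.succs_nonempty hs)
  exact ⟨⟨ext, enum, hext, henum⟩⟩

/-- At round `k ≥ 1` Adam offers the `(unpair k).2`-th successor of the current node, so each
successor is offered at arbitrarily late rounds; should Eve accept it, he moves on to a node of `T`
whose norm exceeds the number of the next stage. -/
def Q0Choice.strategy (C : Q0Choice norm T) (h : History) : AMove :=
  if h.length = 0 then (0, C.ext 0 [])
  else
    let s := histState h
    let c := C.enum s.node (Nat.unpair h.length).2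
    (c, (C.ext (s.stage + 1) (s.node ++ [c])).drop (s.node.length + 1))

namespace Q0Choice

variable (C : Q0Choice norm T) {a : ℕ → AMove} {e : ℕ → Bool}

lemma strategy_move (hF : FollowsA C.strategy a e) {k : ℕ} (hk : 1 ≤ k) :
    a k = (C.enum (gstate a e k).node (Nat.unpair k).2,
      (C.ext ((gstate a e k).stage + 1)
        ((gstate a e k).node ++ [C.enum (gstate a e k).node (Nat.unpair k).2])).drop
          ((gstate a e k).node.length + 1)) := by
  have hlen : (hist a e k).length = k := by simp [hist]
  rw [hF k, strategy, if_neg (by omega), hlen, histState_hist]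

lemma strategy_invariant (hT : IsTree T) (hF : FollowsA C.strategy a e) {k : ℕ} (hk : 1 ≤ k) :
    (gstate a e k).node ∈ T ∧
      ((gstate a e k).stage : ℝ) < norm (gstate a e k).node (succs T (gstate a e k).node) := by
  induction k, hk using Nat.le_induction with
  | base =>
    have ha0 : a 0 = (0, C.ext 0 []) := by rw [hF 0]; rfl
    simpa [gstate, ha0] using (C.ext_spec 0 [] hT.nil_mem).imp_right And.right
  | succ k hk ih =>
    cases he : e k
    · rwa [gstate_succ_of_reject a e hk he]
    rw [gstate_succ_of_accept a e hk he]
    set s := (gstate a e k).node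
    set c := C.enum s (Nat.unpair k).2
    have hc : c ∈ succs T s := (C.succs_eq_range s ih.1).symm ▸ Set.mem_range_self _
    obtain ⟨hmem, hpre, hnorm⟩ := C.ext_spec ((gstate a e k).stage + 1) _ hc
    have hnode : s ++ (a k).1 :: (a k).2 = C.ext ((gstate a e k).stage + 1) (s ++ [c]) := by
      rw [C.strategy_move hF hk]
      simpa using List.prefix_iff_eq_append.1 hpre
    refine ⟨hnode ▸ hmem, ?_⟩
    simpa [hnode] using hnorm

lemma strategy_norm_le_of_rejects (hmono : ∀ t, ∀ X Y : Set ℕ, X ⊆ Y → norm t X ≤ norm t Y)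
    (hT : IsTree T) (hF : FollowsA C.strategy a e) {K : ℕ} (hK : 1 ≤ K)
    (hrej : ∀ k, K ≤ k → e k = false) :
    ((gstate a e K).stage : ℝ) ≤
      norm (gstate a e K).node {c | ∃ k, K ≤ k ∧ c ∈ (gstate a e k).cands} := by
  have hinv := C.strategy_invariant hT hF hK
  refine hinv.2.le.trans (hmono _ _ _ ?_)
  intro c hc
  obtain ⟨j, rfl⟩ : c ∈ Set.range (C.enum (gstate a e K).node) := C.succs_eq_range _ hinv.1 ▸ hc
  have hKk : K ≤ Nat.pair K j := Nat.left_le_pair K j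
  refine ⟨Nat.pair K j + 1, by omega, ?_⟩
  rw [gstate_succ_of_reject a e (hK.trans hKk) (hrej _ hKk), C.strategy_move hF (hK.trans hKk),
    (gstate_of_rejects a e hK hrej hKk).1, Nat.unpair_pair]
  exact Or.inr rfl

lemma strategy_exists_branch_of_stage_unbounded (hT : IsTree T) (hF : FollowsA C.strategy a e)
    (hunb : ∀ n, ∃ k, n ≤ (gstate a e k).stage) :
    ∃ x ∈ branches T, ∀ k, prefixOf (gstate a e k).node x := by
  have hlen (n : ℕ) : ∃ k, n < (gstate a e k).node.length :=
    let ⟨k, hk⟩ := hunb (n + 1)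
    ⟨k, (Nat.lt_succ_self n).trans_le (hk.trans (stage_le_length_node a e k))⟩
  obtain ⟨x, hx⟩ := exists_getElem_eq_of_prefix_chain _ (node_prefix_node_succ a e) hlen
  have hpre (k : ℕ) : prefixOf (gstate a e k).node x := prefixOf_iff.2 (hx k)
  refine ⟨x, fun n => ?_, hpre⟩
  obtain ⟨k, hk⟩ := hlen n
  have hk1 : 1 ≤ k := Nat.one_le_iff_ne_zero.2 fun h => by simp [h, gstate] at hk
  exact hT.2 _ (C.strategy_invariant hT hF hk1).1 _ ((hpre k).res_prefix hk.le)

end Q0Choice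

end TreeStrategy

lemma exists_winning_strategy_of_Q0 {norm : List ℕ → Set ℕ → ℝ}
    (hmono : ∀ t, ∀ X Y : Set ℕ, X ⊆ Y → norm t X ≤ norm t Y) {A : Set (ℕ → ℕ)}
    {T : Set (List ℕ)} (hQ : Q0 norm T) (hTA : branches T ⊆ A) :
    ∃ σ : History → AMove, ∀ a e, FollowsA σ a e → AdamWins norm A a e := by
  obtain ⟨C⟩ := hQ.nonempty_choice
  refine ⟨C.strategy, fun a e hF => ?_⟩
  rcases stage_unbounded_or_eventually_rejects a e with hunb | ⟨K, hK, hrej⟩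
  · obtain ⟨x, hxT, hx⟩ := C.strategy_exists_branch_of_stage_unbounded hQ.1 hF hunb
    exact Or.inr ⟨hunb, x, hTA hxT, hx⟩
  · exact Or.inl ⟨K, hK, fun k hk => (gstate_of_rejects a e hK hrej hk).2.1,
      C.strategy_norm_le_of_rejects hmono hQ.1 hF hK hrej⟩

section StrategyTree

variable (σ : History → AMove) {norm : List ℕ → Set ℕ → ℝ} {A : Set (ℕ → ℕ)}

def playHist (e : ℕ → Bool) : ℕ → History
  | 0 => []
  | k + 1 => playHist e k ++ [(σ (playHist e k), e k)]

def adamMoves (e : ℕ → Bool) (k : ℕ) : AMove := σ (playHist σ e k)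

lemma followsA_adamMoves (e : ℕ → Bool) : FollowsA σ (adamMoves σ e) e := by
  suffices h : ∀ k, playHist σ e k = hist (adamMoves σ e) e k from fun k => by
    rw [adamMoves, h]
  intro k
  induction k with
  | zero => rfl
  | succ k ih => simp [playHist, hist, List.range_succ, ih, adamMoves]

variable {σ}

lemma playHist_congr {e e' : ℕ → Bool} {k : ℕ} (h : ∀ i < k, e i = e' i) :
    playHist σ e k = playHist σ e' k := by
  induction k with
  | zero => rfl
  | succ k ih =>
    rw [playHist, playHist, ih fun i hi => h i (by omega), h k (by omega)]

lemma adamMoves_congr {e e' : ℕ → Bool} {k : ℕ} (h : ∀ i < k, e i = e' i) :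
    adamMoves σ e k = adamMoves σ e' k :=
  congrArg σ (playHist_congr h)

lemma gstate_adamMoves_congr {e e' : ℕ → Bool} {k : ℕ} (h : ∀ i < k, e i = e' i) :
    gstate (adamMoves σ e) e k = gstate (adamMoves σ e') e' k :=
  gstate_congr _ _ (fun _ hi => adamMoves_congr fun j hj => h j (hj.trans hi)) h

variable (σ)

/-! A *position* `p : List Bool` lists Eve's first replies, after which she rejects everything.
The position `[false]` is the one right after Adam's opening move, her reply to which is ignored. -/

def replies (p : List Bool) (i : ℕ) : Bool := p.getD i false

def posState (p : List Bool) : GState :=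
  gstate (adamMoves σ (replies p)) (replies p) p.length

def Offered (p : List Bool) (c : ℕ) : Prop :=
  ∃ k, p.length ≤ k ∧ (adamMoves σ (replies p) k).1 = c

open Classical in
noncomputable def acceptFirst (p : List Bool) (c : ℕ) : List Bool :=
  if h : Offered σ p c then p ++ List.replicate (Nat.find h - p.length) false ++ [true] else p

def IsChild (p q : List Bool) : Prop := ∃ c, Offered σ p c ∧ q = acceptFirst σ p c

def Fresh (p : List Bool) : Prop := 1 ≤ p.length ∧ (posState σ p).cands = ∅

def strategyTree : Set (List ℕ) :=
  {t | ∃ p, ReflTransGen (IsChild σ) [false] p ∧ t <+: (posState σ p).node}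

variable {σ}

section AcceptFirst

open Classical

variable {p : List Bool} {c : ℕ}

lemma acceptFirst_eq (h : Offered σ p c) :
    acceptFirst σ p c = p ++ List.replicate (Nat.find h - p.length) false ++ [true] :=
  dif_pos h

lemma length_acceptFirst (h : Offered σ p c) : (acceptFirst σ p c).length = Nat.find h + 1 := by
  have := (Nat.find_spec h).1
  rw [acceptFirst_eq h]
  simp only [List.length_append, List.length_replicate, List.length_singleton]
  omega

lemma prefix_acceptFirst (h : Offered σ p c) : p <+: acceptFirst σ p c := by
  rw [acceptFirst_eq h, List.append_assoc]
  exact List.prefix_append _ _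

lemma replies_acceptFirst_of_lt (h : Offered σ p c) {i : ℕ} (hi : i < Nat.find h) :
    replies (acceptFirst σ p c) i = replies p i := by
  have := (Nat.find_spec h).1
  rw [acceptFirst_eq h, replies, replies, List.getD_append _ _ _ _ (by simp; omega)]
  rcases lt_or_ge i p.length with hip | hip
  · exact List.getD_append _ _ _ _ hip
  · rw [List.getD_append_right _ _ _ _ hip, List.getD_eq_default _ _ hip]
    simp

lemma replies_acceptFirst_find (h : Offered σ p c) :
    replies (acceptFirst σ p c) (Nat.find h) = true := by
  have := (Nat.find_spec h).1
  rw [acceptFirst_eq h, replies, List.getD_append_right _ _ _ _ (by simp; omega)]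
  simp [Nat.add_sub_cancel' this]

lemma posState_of_rejects (hp : 1 ≤ p.length) {k : ℕ} (hk : p.length ≤ k) :
    (gstate (adamMoves σ (replies p)) (replies p) k).node = (posState σ p).node ∧
      (gstate (adamMoves σ (replies p)) (replies p) k).stage = (posState σ p).stage ∧
      (gstate (adamMoves σ (replies p)) (replies p) k).cands ⊆
        (posState σ p).cands ∪ {c | Offered σ p c} :=
  gstate_of_rejects _ _ hp (fun _ hk => List.getD_eq_default _ _ hk) hk

lemma posState_acceptFirst (hp : 1 ≤ p.length) (h : Offered σ p c) :
    posState σ (acceptFirst σ p c) =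
      ⟨(posState σ p).node ++ c :: (adamMoves σ (replies p) (Nat.find h)).2,
        (posState σ p).stage + 1, ∅⟩ := by
  obtain ⟨hle, hc⟩ := Nat.find_spec h
  have hagree (i : ℕ) (hi : i < Nat.find h) := replies_acceptFirst_of_lt h hi
  obtain ⟨hnode, hstage, -⟩ := posState_of_rejects (σ := σ) hp hle
  rw [posState, length_acceptFirst h, gstate_succ_of_accept _ _ (hp.trans hle)
    (replies_acceptFirst_find h), gstate_adamMoves_congr hagree, adamMoves_congr hagree, hnode,
    hstage, hc]

end AcceptFirst

lemma fresh_root : Fresh σ [false] := ⟨le_rfl, rfl⟩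

lemma fresh_acceptFirst {p : List Bool} {c : ℕ} (hp : Fresh σ p) (h : Offered σ p c) :
    Fresh σ (acceptFirst σ p c) := by
  refine ⟨?_, by rw [posState_acceptFirst hp.1 h]⟩
  rw [length_acceptFirst h]
  exact Nat.le_add_left 1 _

lemma Fresh.node_append_prefix {p : List Bool} {c : ℕ} (hp : Fresh σ p) (h : Offered σ p c) :
    (posState σ p).node ++ [c] <+: (posState σ (acceptFirst σ p c)).node := by
  rw [posState_acceptFirst hp.1 h]
  exact ⟨(adamMoves σ (replies p) (Nat.find h)).2, by simp⟩

lemma Fresh.of_reflTransGen {p q : List Bool} (hp : Fresh σ p)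
    (hpq : ReflTransGen (IsChild σ) p q) : Fresh σ q := by
  induction hpq with
  | refl => exact hp
  | tail _ hqr ih =>
    obtain ⟨c, hc, rfl⟩ := hqr
    exact fresh_acceptFirst ih hc

lemma Fresh.node_prefix_of_reflTransGen {p q : List Bool} (hp : Fresh σ p)
    (hpq : ReflTransGen (IsChild σ) p q) : (posState σ p).node <+: (posState σ q).node := by
  induction hpq with
  | refl => exact List.prefix_rfl
  | tail hpr hqr ih =>
    obtain ⟨c, hc, rfl⟩ := hqr
    exact ih.trans ((List.prefix_append _ _).trans ((hp.of_reflTransGen hpr).node_append_prefix hc))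

lemma Fresh.stage_le_norm (hmono : ∀ t, ∀ X Y : Set ℕ, X ⊆ Y → norm t X ≤ norm t Y)
    (hwin : ∀ a e, FollowsA σ a e → AdamWins norm A a e) {p : List Bool} (hp : Fresh σ p) :
    ((posState σ p).stage : ℝ) ≤ norm (posState σ p).node {c | Offered σ p c} := by
  set a := adamMoves σ (replies p)
  set e := replies p
  have hsteady {k : ℕ} (hk : p.length ≤ k) := posState_of_rejects (σ := σ) hp.1 hk
  obtain ⟨k₀, hk₀, hconst, hnorm⟩ := (hwin a e (followsA_adamMoves σ e)).resolve_right
    fun h => not_stage_unbounded_of_const a e (fun k hk => (hsteady hk).2.1) h.1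
  have hk₀p : p.length ≤ k₀ := by
    -- otherwise round `p.length - 1` keeps the stage, leaving a candidate at the fresh `p`
    by_contra! hlt
    have hj : p.length - 1 + 1 = p.length := Nat.sub_add_cancel hp.1
    have hstage : (gstate a e (p.length - 1 + 1)).stage = (gstate a e (p.length - 1)).stage := by
      rw [hconst (p.length - 1 + 1) (by omega), hconst (p.length - 1) (by omega)]
    have := cands_nonempty_of_stage_eq a e (by omega) hstage
    rw [hj] at this
    exact this.ne_empty hp.2
  obtain ⟨hnode, hstage, -⟩ := hsteady hk₀p
  calc ((posState σ p).stage : ℝ) = (gstate a e k₀).stage := by rw [hstage]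
    _ ≤ norm (gstate a e k₀).node {c | ∃ k, k₀ ≤ k ∧ c ∈ (gstate a e k).cands} := hnorm
    _ ≤ norm (posState σ p).node {c | Offered σ p c} := by
      rw [hnode]
      refine hmono _ _ _ ?_
      rintro c ⟨k, hk, hck⟩
      simpa [hp.2] using (hsteady (hk₀p.trans hk)).2.2 hck

lemma Fresh.exists_reflTransGen_le_stage {p : List Bool} (hp : Fresh σ p) (n : ℕ) :
    ∃ q, ReflTransGen (IsChild σ) p q ∧ n ≤ (posState σ q).stage := by
  induction n with
  | zero => exact ⟨p, .refl, Nat.zero_le _⟩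
  | succ n ih =>
    obtain ⟨q, hpq, hn⟩ := ih
    have hq := hp.of_reflTransGen hpq
    have hoff : Offered σ q _ := ⟨q.length, le_rfl, rfl⟩
    refine ⟨_, hpq.tail ⟨_, hoff, rfl⟩, ?_⟩
    rw [posState_acceptFirst hq.1 hoff]
    exact Nat.succ_le_succ hn

lemma strategyTree_Q0 (hmono : ∀ t, ∀ X Y : Set ℕ, X ⊆ Y → norm t X ≤ norm t Y)
    (hwin : ∀ a e, FollowsA σ a e → AdamWins norm A a e) : Q0 norm (strategyTree σ) := by
  refine ⟨⟨⟨[], [false], .refl, List.nil_prefix⟩,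
    fun t ⟨p, hp, ht⟩ s hs => ⟨p, hp, hs.trans ht⟩⟩, fun n s ⟨p, hp, hsp⟩ => ?_⟩
  have hpf := fresh_root.of_reflTransGen hp
  obtain ⟨q, hpq, hn⟩ := hpf.exists_reflTransGen_le_stage (n + 1)
  have hqf := hpf.of_reflTransGen hpq
  refine ⟨(posState σ q).node, ⟨q, hp.trans hpq, List.prefix_rfl⟩,
    hsp.trans (hpf.node_prefix_of_reflTransGen hpq), ?_⟩
  have hsub : {c | Offered σ q c} ⊆ succs (strategyTree σ) (posState σ q).node :=
    fun c hc => ⟨_, (hp.trans hpq).tail ⟨c, hc, rfl⟩, hqf.node_append_prefix hc⟩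
  calc (n : ℝ) < (posState σ q).stage := by exact_mod_cast hn
    _ ≤ norm (posState σ q).node {c | Offered σ q c} := hqf.stage_le_norm hmono hwin
    _ ≤ _ := hmono _ _ _ hsub

variable (σ) in
def Covers (p : List Bool) (x : ℕ → ℕ) : Prop :=
  ∀ N, ∃ q, ReflTransGen (IsChild σ) p q ∧ res x N <+: (posState σ q).node

section Covers

variable {p : List Bool} {x : ℕ → ℕ}

lemma Covers.prefixOf (hp : Fresh σ p) (hx : Covers σ p x) : prefixOf (posState σ p).node x := by
  obtain ⟨q, hpq, hq⟩ := hx (posState σ p).node.length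
  have hle := List.prefix_of_prefix_length_le (hp.node_prefix_of_reflTransGen hpq) hq
    (by rw [length_res])
  exact hle.eq_of_length (length_res x _).symm

lemma Covers.exists_reflTransGen_acceptFirst (hp : Fresh σ p) (hx : Covers σ p x) {N : ℕ}
    (hN : (posState σ p).node.length < N) :
    Offered σ p (x (posState σ p).node.length) ∧
      ∃ q, ReflTransGen (IsChild σ) (acceptFirst σ p (x (posState σ p).node.length)) q ∧
        res x N <+: (posState σ q).node := by
  -- a node covering `res x N` is reached through the child for the next coordinate of `x`
  obtain ⟨q, hpq, hq⟩ := hx N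
  rcases hpq.cases_head with rfl | ⟨_, ⟨c, hc, rfl⟩, hrq⟩
  · have := hq.length_le
    rw [length_res] at this
    omega
  have hcq := (hp.node_append_prefix hc).trans
    ((fresh_acceptFirst hp hc).node_prefix_of_reflTransGen hrq)
  have hcx : c = x (posState σ p).node.length := by
    have h₁ := hcq.getElem (i := (posState σ p).node.length) (by simp)
    have h₂ := hq.getElem (i := (posState σ p).node.length) (by rwa [length_res])
    simp only [List.getElem_concat_length, getElem_res] at h₁ h₂
    rw [h₁, h₂]
  subst hcx
  exact ⟨hc, q, hrq, hq⟩

lemma Covers.offered (hp : Fresh σ p) (hx : Covers σ p x) :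
    Offered σ p (x (posState σ p).node.length) :=
  (hx.exists_reflTransGen_acceptFirst hp (Nat.lt_succ_self _)).1

lemma Covers.covers_acceptFirst (hp : Fresh σ p) (hx : Covers σ p x) :
    Covers σ (acceptFirst σ p (x (posState σ p).node.length)) x := fun N =>
  have ⟨_, q, hq, hN⟩ := hx.exists_reflTransGen_acceptFirst hp
    (lt_max_of_lt_right (Nat.lt_succ_self _) : _ < max N ((posState σ p).node.length + 1))
  ⟨q, hq, (res_prefix_res x (le_max_left _ _)).trans hN⟩

end Covers

variable (σ) in
noncomputable def branchPos (x : ℕ → ℕ) : ℕ → List Bool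
  | 0 => [false]
  | i + 1 => acceptFirst σ (branchPos x i) (x (posState σ (branchPos x i)).node.length)

lemma branchPos_spec {x : ℕ → ℕ} (hx : x ∈ branches (strategyTree σ)) (i : ℕ) :
    Fresh σ (branchPos σ x i) ∧ Covers σ (branchPos σ x i) x ∧
      (posState σ (branchPos σ x i)).stage = i := by
  induction i with
  | zero => exact ⟨fresh_root, hx, rfl⟩
  | succ i ih =>
    obtain ⟨hfresh, hcov, hstage⟩ := ih
    refine ⟨fresh_acceptFirst hfresh (hcov.offered hfresh), hcov.covers_acceptFirst hfresh, ?_⟩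
    rw [branchPos, posState_acceptFirst hfresh.1 (hcov.offered hfresh), hstage]

lemma branches_strategyTree_subset (hwin : ∀ a e, FollowsA σ a e → AdamWins norm A a e) :
    branches (strategyTree σ) ⊆ A := by
  intro x hx
  have hspec := branchPos_spec hx
  have hoff (i : ℕ) := (hspec i).2.1.offered (hspec i).1
  have hlen (i : ℕ) : i < (branchPos σ x i).length := by
    induction i with
    | zero => simp [branchPos]
    | succ i ih =>
      rw [branchPos, length_acceptFirst (hoff i)]
      have := (Nat.find_spec (hoff i)).1
      omega
  -- the positions along `x` extend each other, so they are the beginnings of one play `e`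
  obtain ⟨e, he⟩ := exists_getElem_eq_of_prefix_chain (branchPos σ x)
    (fun i => prefix_acceptFirst (hoff i)) fun n => ⟨n, hlen n⟩
  have hstate (i : ℕ) : posState σ (branchPos σ x i) =
      gstate (adamMoves σ e) e (branchPos σ x i).length :=
    gstate_adamMoves_congr fun k hk => by rw [replies, List.getD_eq_getElem _ _ hk, he i k hk]
  obtain ⟨y, hyA, hy⟩ := (hwin _ e (followsA_adamMoves σ e)).exists_mem_of_stage_unbounded
    fun n => ⟨(branchPos σ x n).length, by rw [← hstate, (hspec n).2.2]⟩
  suffices x = y from this ▸ hyA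
  funext n
  obtain ⟨hfresh, hcov, hstage⟩ := hspec (n + 1)
  have hn : n < (posState σ (branchPos σ x (n + 1))).node.length := by
    have := stage_le_length_node (adamMoves σ e) e (branchPos σ x (n + 1)).length
    rw [← hstate] at this
    omega
  rw [← prefixOf_iff.1 (hcov.prefixOf hfresh) n hn,
    prefixOf_iff.1 (hstate (n + 1) ▸ hy (branchPos σ x (n + 1)).length) n hn]

end StrategyTree

theorem adam_wins_G0_iff_exists_Q0_tree_general (norm : List ℕ → Set ℕ → ℝ)
    (hmono : ∀ t, ∀ X Y : Set ℕ, X ⊆ Y → norm t X ≤ norm t Y)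
    (A : Set (ℕ → ℕ)) :
    (∃ σ : History → AMove, ∀ a e, FollowsA σ a e → AdamWins norm A a e) ↔
      ∃ T : Set (List ℕ), Q0 norm T ∧ branches T ⊆ A :=
  ⟨fun ⟨σ, hσ⟩ => ⟨strategyTree σ, strategyTree_Q0 hmono hσ, branches_strategyTree_subset hσ⟩,
    fun ⟨_, hQ, hTA⟩ => exists_winning_strategy_of_Q0 hmono hQ hTA⟩

/-- Adam has a winning strategy in the game `G₀(A)` if and only if
there exists a tree `T ∈ Q₀` such that `[T] ⊆ A`. -/
theorem adam_wins_G0_iff_exists_Q0_tree (norm : List ℕ → Set ℕ → ℝ)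
    (hnn : ∀ t X, 0 ≤ norm t X)
    (hmono : ∀ t, ∀ X Y : Set ℕ, X ⊆ Y → norm t X ≤ norm t Y)
    (A : Set (ℕ → ℕ)) :
    (∃ σ : History → AMove, ∀ a e, FollowsA σ a e → AdamWins norm A a e) ↔
      ∃ T : Set (List ℕ), Q0 norm T ∧ branches T ⊆ A :=
  adam_wins_G0_iff_exists_Q0_tree_general norm hmono A
end

section
/- If A ⊆ ω^ω has an F_σ superset B such that no tree T ∈ Q₀ satisfies [T] ⊆ B, then Eve has a winning strategy in the game G₀(A). (Consequence of Borel determinacy together with the characterization of Adam's winning strategies.) -/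
/-!
Eve wins by running, for the closed pieces `F 0, F 1, …` of `B` in turn, a well-founded plan
to keep the real out of `F i`. Such a plan exists at every position because `F i` is small: at a
position without a plan, the set `R` of one-step extensions without a plan must be nonempty and
of norm at least the stage (else Eve could reject `R`), and some point of `F i` extends it (else
Eve has escaped); so the positions without a plan span a tree in `Q₀` whose branches lie in the
closed set `F i`. Following a plan, Eve accepts an offer unless it lies in the current reject
set, whose norm is below the stage. If she rejects forever, Adam's creature has norm below the
stage; if she accepts infinitely often, well-foundedness forces every plan to reach its escape,
so the resulting real avoids every `F i`.
-/

open Set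

theorem res_eq_res_iff {x y : ℕ → ℕ} {k : ℕ} : res x k = res y k ↔ ∀ m < k, x m = y m := by
  simp [res, List.map_inj_left]

theorem prefixOf.of_prefix {s t : List ℕ} {y : ℕ → ℕ} (hst : s <+: t) (ht : prefixOf t y) :
    prefixOf s y := by
  unfold prefixOf at ht ⊢
  rw [ht] at hst
  rw [List.prefix_iff_eq_take.1 hst, res, ← List.map_take, List.take_range,
    min_eq_left (by simpa [res] using hst.length_le)]
  simp [res]

theorem mem_of_forall_res_eq {C : Set (ℕ → ℕ)} (hC : IsClosed C) {x : ℕ → ℕ}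
    (h : ∀ k, ∃ y ∈ C, res y k = res x k) : x ∈ C := by
  refine hC.closure_subset ((PiNat.isTopologicalBasis_cylinders _).mem_closure_iff.2 ?_)
  rintro _ ⟨z, k, rfl⟩ hx
  obtain ⟨y, hyC, hyx⟩ := h k
  refine ⟨y, PiNat.mem_cylinder_iff.2 fun m hm => ?_, hyC⟩
  rw [res_eq_res_iff.1 hyx m hm]
  exact PiNat.mem_cylinder_iff.1 hx m hm

/-- A well-founded plan for Eve, from node `t` at stage `n`, to keep the real out of `C`. -/
inductive EscapePlan (norm : List ℕ → Set ℕ → ℝ) (C : Set (ℕ → ℕ)) : List ℕ → ℕ → Type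
  | escape {t : List ℕ} {n : ℕ} (h : ∀ y ∈ C, ¬ prefixOf t y) : EscapePlan norm C t n
  | filter {t : List ℕ} {n : ℕ} (R : Set ℕ) (hR : R.Nonempty → norm t R < n)
      (next : ∀ c ∉ R, ∀ u, EscapePlan norm C (t ++ c :: u) (n + 1)) : EscapePlan norm C t n

namespace EscapePlan

variable {norm : List ℕ → Set ℕ → ℝ} {C : Set (ℕ → ℕ)} {t : List ℕ} {n : ℕ}

def rejects : EscapePlan norm C t n → Set ℕ
  | escape _ => ∅
  | filter R _ _ => R

theorem norm_rejects_lt (p : EscapePlan norm C t n) (h : p.rejects.Nonempty) :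
    norm t p.rejects < n := by
  cases p with
  | escape _ => simp [rejects] at h
  | filter R hR _ => exact hR h

theorem exists_mem_prefixOf_of_isEmpty (h : IsEmpty (EscapePlan norm C t n)) :
    ∃ y ∈ C, prefixOf t y := by
  by_contra! h'
  exact h.false (escape h')

theorem exists_isEmpty_succ_of_isEmpty (h : IsEmpty (EscapePlan norm C t n)) :
    ∃ R : Set ℕ, R.Nonempty ∧ (n : ℝ) ≤ norm t R ∧
      ∀ c ∈ R, ∃ u, IsEmpty (EscapePlan norm C (t ++ c :: u) (n + 1)) := by
  set R := {c | ∃ u, IsEmpty (EscapePlan norm C (t ++ c :: u) (n + 1))}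
  suffices ¬ (R.Nonempty → norm t R < n) by
    rw [Classical.not_imp, not_lt] at this
    exact ⟨R, this.1, this.2, fun c hc => hc⟩
  intro hR
  refine h.false (filter R hR fun c hc u => ?_)
  exact (not_isEmpty_iff.1 fun hu => hc ⟨u, hu⟩).some

theorem exists_isEmpty_of_isEmpty (h : IsEmpty (EscapePlan norm C t n)) (d : ℕ) :
    ∃ t', t <+: t' ∧ IsEmpty (EscapePlan norm C t' (n + d)) := by
  induction d with
  | zero => exact ⟨t, List.prefix_refl t, h⟩
  | succ d ih =>
    obtain ⟨t', htt', ht'⟩ := ih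
    obtain ⟨R, ⟨c, hc⟩, -, hR⟩ := exists_isEmpty_succ_of_isEmpty ht'
    obtain ⟨u, hu⟩ := hR c hc
    exact ⟨t' ++ c :: u, htt'.trans (List.prefix_append _ _), hu⟩

theorem nonempty_of_isClosed (hmono : ∀ t, Monotone (norm t)) (hC : IsClosed C)
    (hsmall : ∀ T, Q0 norm T → ¬ branches T ⊆ C) (t : List ℕ) (n : ℕ) :
    Nonempty (EscapePlan norm C t n) := by
  by_contra h₀
  rw [not_nonempty_iff] at h₀
  set T := {s | ∃ t n, IsEmpty (EscapePlan norm C t n) ∧ s <+: t}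
  have hQ0 : Q0 norm T := by
    refine ⟨⟨⟨t, t, n, h₀, List.prefix_refl t⟩, ?_⟩, ?_⟩
    · rintro s ⟨t', n', ht', hst'⟩ r hrs
      exact ⟨t', n', ht', hrs.trans hst'⟩
    · rintro m s ⟨t', n', ht', hst'⟩
      obtain ⟨t'', ht't'', ht''⟩ := exists_isEmpty_of_isEmpty ht' (m + 1)
      obtain ⟨R, -, hnR, hR⟩ := exists_isEmpty_succ_of_isEmpty ht''
      have hRT : R ⊆ succs T t'' := fun c hc => by
        obtain ⟨u, hu⟩ := hR c hc
        exact ⟨_, _, hu, by simp⟩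
      refine ⟨t'', ⟨t'', _, ht'', List.prefix_refl _⟩, hst'.trans ht't'', ?_⟩
      calc (m : ℝ) < (n' + (m + 1) : ℕ) := by exact_mod_cast (by omega : m < n' + (m + 1))
        _ ≤ norm t'' R := hnR
        _ ≤ norm t'' (succs T t'') := hmono t'' hRT
  refine hsmall T hQ0 fun x hx => mem_of_forall_res_eq hC fun k => ?_
  obtain ⟨t', n', ht', hxt'⟩ := hx k
  obtain ⟨y, hyC, hyt'⟩ := exists_mem_prefixOf_of_isEmpty ht'
  have hy : prefixOf (res x k) y := hyt'.of_prefix hxt'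
  refine ⟨y, hyC, ?_⟩
  rw [hy, show (res x k).length = k by simp [res]]

end EscapePlan

structure EvePlan (norm : List ℕ → Set ℕ → ℝ) (F : ℕ → Set (ℕ → ℕ)) where
  target : ℕ
  node : List ℕ
  stage : ℕ
  plan : EscapePlan norm (F target) node stage

namespace EvePlan

variable {norm : List ℕ → Set ℕ → ℝ} {F : ℕ → Set (ℕ → ℕ)}
  (esc : ∀ i t n, EscapePlan norm (F i) t n)

def rejects (p : EvePlan norm F) : Set ℕ := p.plan.rejects

def init (t : List ℕ) : EvePlan norm F := ⟨0, t, 0, esc 0 t 0⟩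

open Classical in
/-- The branch `c ∈ R` is never taken: Eve rejects those offers. -/
noncomputable def next : EvePlan norm F → ℕ → List ℕ → EvePlan norm F
  | ⟨i, t, n, .escape _⟩, c, u => ⟨i + 1, t ++ c :: u, n + 1, esc _ _ _⟩
  | ⟨i, t, n, .filter R _ next⟩, c, u =>
    if hc : c ∈ R then ⟨i, t ++ c :: u, n + 1, esc _ _ _⟩ else ⟨i, t ++ c :: u, n + 1, next c hc u⟩

noncomputable def update (p : EvePlan norm F) (m : AMove) (b : Bool) : EvePlan norm F :=
  if b then p.next esc m.1 m.2 else p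

theorem next_node (p : EvePlan norm F) (c : ℕ) (u : List ℕ) :
    (p.next esc c u).node = p.node ++ c :: u := by
  rcases p with ⟨i, t, n, _ | ⟨R, _, _⟩⟩
  · rfl
  · by_cases hc : c ∈ R <;> simp [next, hc]

theorem next_stage (p : EvePlan norm F) (c : ℕ) (u : List ℕ) :
    (p.next esc c u).stage = p.stage + 1 := by
  rcases p with ⟨i, t, n, _ | ⟨R, _, _⟩⟩
  · rfl
  · by_cases hc : c ∈ R <;> simp [next, hc]

def Tracks (p : EvePlan norm F) (g : GState) : Prop :=
  p.node = g.node ∧ p.stage = g.stage ∧ g.cands ⊆ p.rejects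

end EvePlan

section Strategy

variable {norm : List ℕ → Set ℕ → ℝ} {F : ℕ → Set (ℕ → ℕ)}
  (esc : ∀ i t n, EscapePlan norm (F i) t n)

/-- Eve's memory is `none` before Adam's opening move. -/
noncomputable def eveUpdate : Option (EvePlan norm F) → AMove × Bool → Option (EvePlan norm F)
  | none, (m, _) => some (EvePlan.init esc m.2)
  | some p, (m, b) => some (p.update esc m b)

open Classical in
noncomputable def eveStrategy (h : History) (m : AMove) : Bool :=
  ((h.foldl (eveUpdate esc) none).map fun p => decide (m.1 ∉ p.rejects)).getD true

/-- Eve's plan after round `k + 1` of the play `(a, e)`. -/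
noncomputable def planSeq (a : ℕ → AMove) (e : ℕ → Bool) : ℕ → EvePlan norm F
  | 0 => EvePlan.init esc (a 0).2
  | k + 1 => (planSeq a e k).update esc (a (k + 1)) (e (k + 1))

theorem foldl_eveUpdate_hist (a : ℕ → AMove) (e : ℕ → Bool) (k : ℕ) :
    (hist a e (k + 1)).foldl (eveUpdate esc) none = some (planSeq esc a e k) := by
  induction k with
  | zero => rfl
  | succ k ih =>
    rw [hist, List.range_succ, List.map_append, List.foldl_append, ← hist, ih]
    rfl

end Strategy

section Play

variable {a : ℕ → AMove} {e : ℕ → Bool}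

theorem gstate_add_two (a : ℕ → AMove) (e : ℕ → Bool) (k : ℕ) :
    gstate a e (k + 2) = step (gstate a e (k + 1)) (a (k + 1)) (e (k + 1)) := rfl

theorem stage_gstate_add_two (k : ℕ) :
    (gstate a e (k + 2)).stage = (gstate a e (k + 1)).stage + (e (k + 1)).toNat := by
  rw [gstate_add_two, step]
  cases e (k + 1) <;> rfl

theorem monotone_stage_gstate (a : ℕ → AMove) (e : ℕ → Bool) :
    Monotone fun k => (gstate a e k).stage := by
  refine monotone_nat_of_le_succ fun k => ?_
  cases k with
  | zero => exact Nat.zero_le _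
  | succ k => exact (stage_gstate_add_two k).symm ▸ Nat.le_add_right _ _

theorem exists_accept_of_unbounded (h : ∀ n, ∃ k, n ≤ (gstate a e k).stage) (m : ℕ) :
    ∃ k, m ≤ k ∧ e (k + 1) = true := by
  by_contra! hrej
  have hconst : ∀ k, m + 1 ≤ k → (gstate a e k).stage = (gstate a e (m + 1)).stage := by
    intro k hk
    induction k, hk using Nat.le_induction with
    | base => rfl
    | succ k hk ih =>
      obtain ⟨k, rfl⟩ : ∃ j, k = j + 1 := ⟨k - 1, by omega⟩
      simp [stage_gstate_add_two, hrej k (by omega), ih]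
  obtain ⟨k, hk⟩ := h ((gstate a e (m + 1)).stage + 1)
  rcases le_total k (m + 1) with hkm | hkm
  · have : (gstate a e k).stage ≤ (gstate a e (m + 1)).stage := monotone_stage_gstate a e hkm
    omega
  · have := hconst k hkm
    omega

variable {norm : List ℕ → Set ℕ → ℝ} {F : ℕ → Set (ℕ → ℕ)}
  {esc : ∀ i t n, EscapePlan norm (F i) t n}

theorem planSeq_eq_of_forall_reject {j k : ℕ} (hjk : j ≤ k)
    (h : ∀ m, j ≤ m → m < k → e (m + 1) = false) : planSeq esc a e k = planSeq esc a e j := by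
  induction k, hjk using Nat.le_induction with
  | base => rfl
  | succ k hjk ih =>
    rw [planSeq, EvePlan.update, h k hjk k.lt_succ_self, if_neg Bool.false_ne_true]
    exact ih fun m hjm hmk => h m hjm (hmk.trans k.lt_succ_self)

theorem eveStrategy_accepts_iff (hτ : FollowsE (eveStrategy esc) a e) (k : ℕ) :
    e (k + 1) = true ↔ (a (k + 1)).1 ∉ (planSeq esc a e k).rejects := by
  rw [hτ (k + 1), eveStrategy, foldl_eveUpdate_hist]
  simp

theorem tracks_planSeq (hτ : FollowsE (eveStrategy esc) a e) (k : ℕ) :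
    (planSeq esc a e k).Tracks (gstate a e (k + 1)) := by
  induction k with
  | zero => exact ⟨rfl, rfl, empty_subset _⟩
  | succ k ih =>
    obtain ⟨hnode, hstage, hcands⟩ := ih
    have hacc := eveStrategy_accepts_iff hτ k
    rw [planSeq, gstate_add_two, EvePlan.update, step]
    cases he : e (k + 1)
    · rw [he] at hacc
      exact ⟨hnode, hstage, union_subset hcands (singleton_subset_iff.2 (by simpa using hacc))⟩
    · exact ⟨by simp [EvePlan.next_node, hnode], by simp [EvePlan.next_stage, hstage],
        empty_subset _⟩

theorem norm_cands_lt_stage (hmono : ∀ t, Monotone (norm t))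
    (hτ : FollowsE (eveStrategy esc) a e) {k₀ : ℕ} (hk₀ : 1 ≤ k₀)
    (hconst : ∀ k, k₀ ≤ k → (gstate a e k).stage = (gstate a e k₀).stage) :
    norm (gstate a e k₀).node {c | ∃ k, k₀ ≤ k ∧ c ∈ (gstate a e k).cands} <
      (gstate a e k₀).stage := by
  obtain ⟨j, rfl⟩ : ∃ j, k₀ = j + 1 := ⟨k₀ - 1, by omega⟩
  have hrej : ∀ k, j ≤ k → e (k + 1) = false := fun k hk => by
    have h := (hconst (k + 2) (by omega)).trans (hconst (k + 1) (by omega)).symm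
    rw [stage_gstate_add_two] at h
    simpa using h
  have hplan : ∀ k, j ≤ k → planSeq esc a e k = planSeq esc a e j := fun k hk =>
    planSeq_eq_of_forall_reject hk fun m hm _ => hrej m hm
  have hsub : {c | ∃ k, j + 1 ≤ k ∧ c ∈ (gstate a e k).cands} ⊆ (planSeq esc a e j).rejects := by
    rintro c ⟨k, hk, hc⟩
    obtain ⟨k, rfl⟩ : ∃ i, k = i + 1 := ⟨k - 1, by omega⟩
    rw [← hplan k (by omega)]
    exact (tracks_planSeq hτ k).2.2 hc
  have hne : (planSeq esc a e j).rejects.Nonempty :=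
    ⟨(a (j + 1)).1, by simpa [hrej j le_rfl] using (eveStrategy_accepts_iff hτ j).not⟩
  obtain ⟨hnode, hstage, -⟩ := tracks_planSeq hτ j
  rw [← hnode, ← hstage]
  exact (hmono _ hsub).trans_lt ((planSeq esc a e j).plan.norm_rejects_lt hne)

theorem exists_accept_planSeq_eq (hacc : ∀ m, ∃ k, m ≤ k ∧ e (k + 1) = true) (k : ℕ) :
    ∃ k', e (k' + 1) = true ∧ planSeq esc a e k' = planSeq esc a e k := by
  classical
  have hex := hacc k
  refine ⟨Nat.find hex, (Nat.find_spec hex).2,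
    planSeq_eq_of_forall_reject (Nat.find_spec hex).1 fun m hkm hm => ?_⟩
  simpa using fun h => Nat.find_min hex hm ⟨hkm, h⟩

theorem exists_planSeq_eq_escape (hτ : FollowsE (eveStrategy esc) a e)
    (hacc : ∀ m, ∃ k, m ≤ k ∧ e (k + 1) = true) {i : ℕ} {t : List ℕ} {n : ℕ}
    (p : EscapePlan norm (F i) t n) {k : ℕ} (hk : planSeq esc a e k = ⟨i, t, n, p⟩) :
    ∃ k t n h, planSeq esc a e k = ⟨i, t, n, .escape h⟩ := by
  induction p generalizing k with
  | escape h => exact ⟨k, _, _, h, hk⟩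
  | filter R hR next ih =>
    obtain ⟨k', hacc', hk'⟩ := exists_accept_planSeq_eq hacc k
    have hc : (a (k' + 1)).1 ∉ R := by
      have := (eveStrategy_accepts_iff hτ k').1 hacc'
      rwa [hk', hk] at this
    refine ih _ hc (a (k' + 1)).2 (k := k' + 1) ?_
    rw [planSeq, hk', hk, EvePlan.update, if_pos hacc', EvePlan.next, dif_neg hc]

theorem forall_exists_planSeq_eq_escape (hτ : FollowsE (eveStrategy esc) a e)
    (hacc : ∀ m, ∃ k, m ≤ k ∧ e (k + 1) = true) (i : ℕ) :
    ∃ k t n h, planSeq esc a e k = ⟨i, t, n, .escape h⟩ := by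
  induction i with
  | zero => exact exists_planSeq_eq_escape hτ hacc (planSeq esc a e 0).plan (k := 0) rfl
  | succ i ih =>
    obtain ⟨k, t, n, h, hk⟩ := ih
    have hacc' : e (k + 1) = true :=
      (eveStrategy_accepts_iff hτ k).2 (by rw [hk]; exact notMem_empty _)
    have hnext : planSeq esc a e (k + 1) =
        ⟨i + 1, _, _, esc (i + 1) (t ++ (a (k + 1)).1 :: (a (k + 1)).2) (n + 1)⟩ := by
      rw [planSeq, hk, EvePlan.update, if_pos hacc']
      rfl
    exact exists_planSeq_eq_escape hτ hacc _ hnext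

theorem notMem_of_forall_prefixOf (hτ : FollowsE (eveStrategy esc) a e)
    (hstage : ∀ n, ∃ k, n ≤ (gstate a e k).stage) {x : ℕ → ℕ}
    (hx : ∀ k, prefixOf (gstate a e k).node x) (i : ℕ) : x ∉ F i := by
  obtain ⟨k, t, n, h, hk⟩ :=
    forall_exists_planSeq_eq_escape hτ (exists_accept_of_unbounded hstage) i
  have hnode : t = (gstate a e (k + 1)).node := by
    simpa [hk] using (tracks_planSeq hτ k).1
  exact fun hxF => h x hxF (hnode ▸ hx (k + 1))

end Play

theorem Fsigma_small_implies_eve_wins_G0_general (norm : List ℕ → Set ℕ → ℝ)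
    (hmono : ∀ t, ∀ X Y : Set ℕ, X ⊆ Y → norm t X ≤ norm t Y)
    (A B : Set (ℕ → ℕ)) (hAB : A ⊆ B)
    (hFsigma : ∃ F : ℕ → Set (ℕ → ℕ), (∀ n, IsClosed (F n)) ∧ B = ⋃ n, F n)
    (hno : ∀ T : Set (List ℕ), Q0 norm T → ¬ branches T ⊆ B) :
    ∃ τ : History → AMove → Bool, ∀ a e, FollowsE τ a e → ¬ AdamWins norm A a e := by
  obtain ⟨F, hF, rfl⟩ := hFsigma
  have hesc i t n : Nonempty (EscapePlan norm (F i) t n) :=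
    EscapePlan.nonempty_of_isClosed hmono (hF i)
      (fun T hT hTF => hno T hT (hTF.trans (subset_iUnion F i))) t n
  refine ⟨eveStrategy fun i t n => (hesc i t n).some, fun a e hτ => ?_⟩
  rintro (⟨k₀, hk₀, hconst, hnorm⟩ | ⟨hstage, x, hxA, hx⟩)
  · exact (norm_cands_lt_stage hmono hτ hk₀ hconst).not_ge hnorm
  · obtain ⟨i, hi⟩ := mem_iUnion.1 (hAB hxA)
    exact notMem_of_forall_prefixOf hτ hstage hx i hi

/-- If `A ⊆ ω^ω` has an `F_σ` superset `B` such that no tree `T ∈ Q₀`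
satisfies `[T] ⊆ B`, then Eve has a winning strategy in the game `G₀(A)`. -/
theorem Fsigma_small_implies_eve_wins_G0 (norm : List ℕ → Set ℕ → ℝ)
    (hnn : ∀ t X, 0 ≤ norm t X)
    (hmono : ∀ t, ∀ X Y : Set ℕ, X ⊆ Y → norm t X ≤ norm t Y)
    (hBorel : ∀ t : List ℕ, Measurable fun X : ℕ → Bool => norm t {n | X n = true})
    (A B : Set (ℕ → ℕ)) (hAB : A ⊆ B)
    (hFsigma : ∃ F : ℕ → Set (ℕ → ℕ), (∀ n, IsClosed (F n)) ∧ B = ⋃ n, F n)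
    (hno : ∀ T : Set (List ℕ), Q0 norm T → ¬ branches T ⊆ B) :
    ∃ τ : History → AMove → Bool, ∀ a e, FollowsE τ a e → ¬ AdamWins norm A a e :=
  Fsigma_small_implies_eve_wins_G0_general norm hmono A B hAB hFsigma hno
end

section
/- The collection I₀ = {A ⊆ ω^ω : A has an F_σ superset B such that no T ∈ Q₀ satisfies [T] ⊆ B} is a σ-ideal: it is downward closed under subsets and closed under countable unions. -/
/-- The collection `I₀` of all sets with an `F_σ` superset containing no branch set of a
`Q₀`-tree. -/
def I0 (norm : List ℕ → Set ℕ → ℝ) : Set (Set (ℕ → ℕ)) :=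
  {A | ∃ B : Set (ℕ → ℕ), A ⊆ B ∧
    (∃ F : ℕ → Set (ℕ → ℕ), (∀ n, IsClosed (F n)) ∧ B = ⋃ n, F n) ∧
    ∀ T : Set (List ℕ), Q0 norm T → ¬ branches T ⊆ B}

/-!
The branch set `[T]` of a tree is closed in Baire space, hence Polish. If a `Q₀`-tree `T` had
`[T]` inside a countable union of closed sets `F i`, the Baire category theorem applied in `[T]`
would give a node `s ∈ T` all of whose branches lie in a single `F i`. The nodes of `T`
comparable with `s` form a `Q₀`-tree again, since every node of large norm above `s` keeps all
its successors, so a single `F i` already contains the branch set of a `Q₀`-tree.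
-/

open Topology
open PiNat (cylinder)

lemma res_succ (x : ℕ → ℕ) (n : ℕ) : res x (n + 1) = res x n ++ [x n] := by
  simp [res, List.range_succ]

lemma res_eq_res_iff_s3 {x y : ℕ → ℕ} {n : ℕ} : res y n = res x n ↔ y ∈ cylinder x n := by
  simp [res, List.map_inj_left, PiNat.cylinder]

lemma isClosed_branches (T : Set (List ℕ)) : IsClosed (branches T) := by
  have hbr : branches T = ⋂ n, {x | res x n ∈ T} := by ext; simp [branches]
  rw [hbr]
  refine isClosed_iInter fun n => isOpen_compl_iff.1 (isOpen_iff_forall_mem_open.2 fun x hx => ?_)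
  refine ⟨cylinder x n, fun y hy => ?_, PiNat.isOpen_cylinder _ x n, PiNat.self_mem_cylinder x n⟩
  simpa [res_eq_res_iff_s3.2 hy] using hx

lemma exists_cylinder_subset_of_mem_nhds {x : ℕ → ℕ} {u : Set (ℕ → ℕ)} (hu : u ∈ 𝓝 x) :
    ∃ n, cylinder x n ⊆ u := by
  obtain ⟨_, ⟨z, n, rfl⟩, hxz, hzu⟩ :=
    ((PiNat.isTopologicalBasis_cylinders fun _ => ℕ).mem_nhds_iff).1 hu
  exact ⟨n, PiNat.mem_cylinder_iff_eq.1 hxz ▸ hzu⟩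

def throughNode (T : Set (List ℕ)) (s : List ℕ) : Set (List ℕ) :=
  {u | u ∈ T ∧ (u <+: s ∨ s <+: u)}

lemma succs_throughNode_of_prefix {T : Set (List ℕ)} {s t : List ℕ} (h : s <+: t) :
    succs (throughNode T s) t = succs T t := by
  ext a
  exact ⟨And.left, fun ha => ⟨ha, Or.inr (h.trans (List.prefix_append _ _))⟩⟩

lemma branches_throughNode_res_subset (T : Set (List ℕ)) (x : ℕ → ℕ) (m : ℕ) :
    branches (throughNode T (res x m)) ⊆ branches T ∩ cylinder x m := by
  intro y hy
  refine ⟨fun n => (hy n).1, res_eq_res_iff_s3.1 ?_⟩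
  have hlen : (res y m).length = (res x m).length := by simp [res]
  rcases (hy m).2 with h | h
  · exact h.eq_of_length hlen
  · exact (h.eq_of_length hlen.symm).symm

namespace Q0

variable {norm : List ℕ → Set ℕ → ℝ} {T : Set (List ℕ)}

lemma exists_append_mem (hT : Q0 norm T) {t : List ℕ} (ht : t ∈ T) : ∃ a, t ++ [a] ∈ T := by
  obtain ⟨n, hn⟩ := exists_nat_gt (norm t (succs T t))
  obtain ⟨u, hu, ⟨_ | ⟨a, r⟩, rfl⟩, hnorm⟩ := hT.2 n t ht
  · exact absurd hnorm (by simpa using hn.le)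
  · exact ⟨a, hT.1.2 _ hu _ ⟨r, by simp⟩⟩

lemma branches_nonempty (hT : Q0 norm T) : (branches T).Nonempty := by
  choose! next hnext using fun t (ht : t ∈ T) => hT.exists_append_mem ht
  let path : ℕ → List ℕ := fun n => Nat.rec [] (fun _ t => t ++ [next t]) n
  have hpath : ∀ n, path n ∈ T := fun n => by
    induction n with
    | zero => obtain ⟨t, ht⟩ := hT.1.1; exact hT.1.2 t ht [] List.nil_prefix
    | succ n ih => exact hnext _ ih
  have hres : ∀ n, res (fun k => next (path k)) n = path n := fun n => by
    induction n with
    | zero => rfl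
    | succ n ih => rw [res_succ, ih]
  exact ⟨_, fun n => (hres n).symm ▸ hpath n⟩

lemma throughNode (hT : Q0 norm T) {s : List ℕ} (hs : s ∈ T) :
    Q0 norm (_root_.throughNode T s) := by
  refine ⟨⟨⟨s, hs, Or.inl List.prefix_rfl⟩, ?_⟩, fun n u hu => ?_⟩
  · rintro u ⟨hu, hus | hsu⟩ v hvu
    · exact ⟨hT.1.2 u hu v hvu, Or.inl (hvu.trans hus)⟩
    · exact ⟨hT.1.2 u hu v hvu, List.prefix_or_prefix_of_prefix hvu hsu⟩
  obtain ⟨base, hbase, hub, hsb⟩ : ∃ base ∈ T, u <+: base ∧ s <+: base := by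
    rcases hu.2 with hus | hsu
    · exact ⟨s, hs, hus, List.prefix_rfl⟩
    · exact ⟨u, hu.1, List.prefix_rfl, hsu⟩
  obtain ⟨t, ht, hbt, hnorm⟩ := hT.2 n base hbase
  exact ⟨t, ⟨ht, Or.inr (hsb.trans hbt)⟩, hub.trans hbt,
    (succs_throughNode_of_prefix (hsb.trans hbt)).symm ▸ hnorm⟩

lemma exists_branches_subset (hT : Q0 norm T) {ι : Type*} [Countable ι]
    {F : ι → Set (ℕ → ℕ)} (hF : ∀ i, IsClosed (F i)) (hTF : branches T ⊆ ⋃ i, F i) :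
    ∃ i, ∃ T', Q0 norm T' ∧ branches T' ⊆ F i := by
  have : PolishSpace (branches T) := (isClosed_branches T).polishSpace
  have : Nonempty (branches T) := hT.branches_nonempty.to_subtype
  have hcover : ⋃ i, Subtype.val ⁻¹' F i = (Set.univ : Set (branches T)) := by
    simpa [← Set.preimage_iUnion, Set.preimage_eq_univ_iff] using hTF
  obtain ⟨i, x, hx⟩ := nonempty_interior_of_iUnion_of_closed
    (fun i => (hF i).preimage continuous_subtype_val) hcover
  obtain ⟨u, hu, hxu⟩ := (mem_nhds_subtype _ _ _).1 (mem_interior_iff_mem_nhds.1 hx)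
  obtain ⟨m, hm⟩ := exists_cylinder_subset_of_mem_nhds hu
  refine ⟨i, _root_.throughNode T (res x m), hT.throughNode (x.2 m), fun y hy => ?_⟩
  obtain ⟨hyT, hyx⟩ := branches_throughNode_res_subset T x m hy
  exact @hxu ⟨y, hyT⟩ (hm hyx)

end Q0

theorem I0_sigma_ideal_general (norm : List ℕ → Set ℕ → ℝ) :
    (∀ A A' : Set (ℕ → ℕ), A' ⊆ A → A ∈ I0 norm → A' ∈ I0 norm) ∧
    (∀ f : ℕ → Set (ℕ → ℕ), (∀ n, f n ∈ I0 norm) → (⋃ n, f n) ∈ I0 norm) := by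
  refine ⟨fun A A' hA'A ⟨B, hAB, hB⟩ => ⟨B, hA'A.trans hAB, hB⟩, fun f hf => ?_⟩
  choose B hfB hBFσ hB using hf
  choose F hFcl hBF using hBFσ
  let G : ℕ → Set (ℕ → ℕ) := fun k => F k.unpair.1 k.unpair.2
  have hG : ⋃ n, B n = ⋃ k, G k := by simp only [G, Set.iUnion_unpair, hBF]
  refine ⟨⋃ n, B n, Set.iUnion_mono hfB, ⟨G, fun k => hFcl _ _, hG⟩, fun T hT hTB => ?_⟩
  obtain ⟨k, T', hT', hT'G⟩ := hT.exists_branches_subset (fun k => hFcl _ _) (hG ▸ hTB)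
  refine hB k.unpair.1 T' hT' (hT'G.trans ?_)
  rw [hBF]
  exact Set.subset_iUnion (F k.unpair.1) k.unpair.2

/-- `I₀` is a σ-ideal: downward closed and closed under countable unions. -/
theorem I0_sigma_ideal (norm : List ℕ → Set ℕ → ℝ)
    (hnn : ∀ t X, 0 ≤ norm t X)
    (hmono : ∀ t, ∀ X Y : Set ℕ, X ⊆ Y → norm t X ≤ norm t Y)
    (hBorel : ∀ t : List ℕ, Measurable fun X : ℕ → Bool => norm t {n | X n = true})
    (hfull : Q0 norm Set.univ) :
    (∀ A A' : Set (ℕ → ℕ), A' ⊆ A → A ∈ I0 norm → A' ∈ I0 norm) ∧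
    (∀ f : ℕ → Set (ℕ → ℕ), (∀ n, f n ∈ I0 norm) → (⋃ n, f n) ∈ I0 norm) :=
  I0_sigma_ideal_general norm
end

section
/- If Eve has winning strategies σ_n in the games G₀(A_n) for each n ∈ ω, and each A_n is F_σ, then no tree T ∈ Q₀ satisfies [T] ⊆ ⋃_n A_n; equivalently, the union of countably many F_σ sets each containing no branch set [T] of a Q₀-tree contains no such branch set. -/
namespace St18

@[simp] lemma res_length (x : ℕ → ℕ) (n : ℕ) : (res x n).length = n := by
  simp [res]

lemma res_getElem (x : ℕ → ℕ) {n i : ℕ} (h : i < n) :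
    (res x n)[i]'(by simpa using h) = x i := by
  simp [res]

lemma res_prefix (x : ℕ → ℕ) {m n : ℕ} (h : m ≤ n) : res x m <+: res x n := by
  refine List.prefix_iff_eq_take.2 ?_
  apply List.ext_getElem (by simp [Nat.min_eq_left h])
  intro i h1 h2
  rw [res_getElem x (by simpa using h1)]
  rw [List.getElem_take]
  rw [res_getElem x (lt_of_lt_of_le (by simpa using h1) h)]

lemma eq_res_of_getElem {x : ℕ → ℕ} {l : List ℕ}
    (h : ∀ i (hi : i < l.length), l[i] = x i) : l = res x l.length := by
  apply List.ext_getElem (by simp)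
  intro i h1 h2
  rw [h i h1, res_getElem x (by simpa using h2)]

/-- Trees contain the root. -/
lemma root_mem {T : Set (List ℕ)} (hT : IsTree T) : [] ∈ T := by
  obtain ⟨s, hs⟩ := hT.1
  exact hT.2 s hs [] (List.nil_prefix)

/-- In a `Q0` tree, every node has a successor. -/
lemma succs_nonempty {norm : List ℕ → Set ℕ → ℝ} {T : Set (List ℕ)} (hQ : Q0 norm T) :
    ∀ s ∈ T, (succs T s).Nonempty := by
  intro s hs
  by_contra hne
  have hemp : succs T s = ∅ := Set.not_nonempty_iff_eq_empty.1 hne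
  obtain ⟨t, htT, hst, hlt⟩ := hQ.2 ⌈norm s ∅⌉₊ s hs
  have hts : t = s := by
    by_contra hne2
    obtain ⟨u, hu⟩ := hst
    have hu0 : u ≠ [] := by rintro rfl; simp at hu; exact hne2 hu.symm
    obtain ⟨c, u', rfl⟩ := List.exists_cons_of_ne_nil hu0
    have : s ++ [c] ∈ T := by
      refine hQ.1.2 t htT _ ⟨u', ?_⟩
      rw [← hu]; simp
    exact absurd this (by simpa [succs, hemp] using Set.eq_empty_iff_forall_notMem.1 hemp c)
  rw [hts, hemp] at hlt
  exact absurd hlt (not_lt.2 (Nat.le_ceil _))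

end St18

namespace St18
noncomputable section
open Classical in
/-- A canonical successor of a node. -/
noncomputable def nxt (T : Set (List ℕ)) (s : List ℕ) : ℕ :=
  if h : (succs T s).Nonempty then h.choose else 0

lemma nxt_mem {T : Set (List ℕ)} {s : List ℕ} (h : (succs T s).Nonempty) :
    nxt T s ∈ succs T s := by
  rw [nxt, dif_pos h]; exact h.choose_spec

/-- The canonical chain extending a node. -/
noncomputable def chain (T : Set (List ℕ)) (s : List ℕ) : ℕ → List ℕ
  | 0 => s
  | k + 1 => chain T s k ++ [nxt T (chain T s k)]

@[simp] lemma chain_length (T : Set (List ℕ)) (s : List ℕ) (k : ℕ) :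
    (chain T s k).length = s.length + k := by
  induction k with
  | zero => simp [chain]
  | succ k ih => simp [chain, ih]; omega

lemma chain_mem {norm : List ℕ → Set ℕ → ℝ} {T : Set (List ℕ)} (hQ : Q0 norm T)
    {s : List ℕ} (hs : s ∈ T) (k : ℕ) : chain T s k ∈ T := by
  induction k with
  | zero => exact hs
  | succ k ih => exact nxt_mem (succs_nonempty hQ _ ih)

lemma chain_prefix (T : Set (List ℕ)) (s : List ℕ) {k m : ℕ} (h : k ≤ m) :
    chain T s k <+: chain T s m := by
  induction m with
  | zero => simp_all
  | succ m ih =>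
    rcases Nat.lt_or_ge k (m+1) with h' | h'
    · exact (ih (by omega)).trans ⟨_, rfl⟩
    · have : k = m + 1 := by omega
      subst this; exact List.prefix_refl _

/-- The canonical branch through a node. -/
noncomputable def branchThru (T : Set (List ℕ)) (s : List ℕ) : ℕ → ℕ :=
  fun n => (chain T s (n + 1)).getD n 0

lemma chain_getD (T : Set (List ℕ)) (s : List ℕ) {k n : ℕ} (h : n < s.length + k) :
    (chain T s k).getD n 0 = branchThru T s n := by
  have h1 : n < (chain T s k).length := by simp [h]
  have h2 : n < (chain T s (n+1)).length := by simp; omega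
  rcases chain_prefix T s (le_max_left k (n+1)) with ⟨u1, hu1⟩
  rcases chain_prefix T s (le_max_right k (n+1)) with ⟨u2, hu2⟩
  rw [branchThru, List.getD_eq_getElem _ _ h1, List.getD_eq_getElem _ _ h2]
  have e1 : (chain T s k)[n] = (chain T s (max k (n+1)))[n]'(by
      rcases chain_prefix T s (le_max_left k (n+1)) with ⟨u, hu⟩
      rw [← hu]; simp; omega) := ((chain_prefix T s (le_max_left k (n+1))).getElem h1)
  have e2 : (chain T s (n+1))[n] = (chain T s (max k (n+1)))[n]'(by
      rcases chain_prefix T s (le_max_right k (n+1)) with ⟨u, hu⟩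
      rw [← hu]; simp; omega) := ((chain_prefix T s (le_max_right k (n+1))).getElem h2)
  rw [e1, e2]

lemma res_branchThru (T : Set (List ℕ)) (s : List ℕ) (k : ℕ) :
    res (branchThru T s) (s.length + k) = chain T s k := by
  symm
  have := eq_res_of_getElem (x := branchThru T s) (l := chain T s k) ?_
  · simpa using this
  · intro i hi
    have hi' : i < s.length + k := by simpa using hi
    rw [← chain_getD T s hi', List.getD_eq_getElem _ _ hi]

lemma exists_branch_through {norm : List ℕ → Set ℕ → ℝ} {T : Set (List ℕ)} (hQ : Q0 norm T)
    {s : List ℕ} (hs : s ∈ T) : branchThru T s ∈ branches T ∧ res (branchThru T s) s.length = s := by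
  constructor
  · intro n
    have h1 : res (branchThru T s) (s.length + n) = chain T s n := res_branchThru T s n
    have h2 : res (branchThru T s) n <+: res (branchThru T s) (s.length + n) :=
      res_prefix _ (by omega)
    rw [h1] at h2
    exact hQ.1.2 _ (chain_mem hQ hs n) _ h2
  · have := res_branchThru T s 0
    simpa [chain] using this

end
end St18

namespace St18

/-- The subtree of nodes comparable with `s`. -/
def subAt (T : Set (List ℕ)) (s : List ℕ) : Set (List ℕ) :=
  {t ∈ T | t <+: s ∨ s <+: t}

lemma subAt_subset (T : Set (List ℕ)) (s : List ℕ) : subAt T s ⊆ T := fun _ h => h.1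

lemma succs_subAt {T : Set (List ℕ)} {s t : List ℕ} (h : s <+: t) :
    succs (subAt T s) t = succs T t := by
  ext a
  simp only [succs, subAt, Set.mem_setOf_eq, Set.mem_sep_iff]
  constructor
  · rintro ⟨h1, _⟩; exact h1
  · intro h1
    exact ⟨h1, Or.inr (h.trans ⟨[a], rfl⟩)⟩

lemma Q0_subAt {norm : List ℕ → Set ℕ → ℝ} {T : Set (List ℕ)} (hQ : Q0 norm T)
    {s : List ℕ} (hs : s ∈ T) : Q0 norm (subAt T s) := by
  constructor
  · constructor
    · exact ⟨s, hs, Or.inr (List.prefix_refl s)⟩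
    · rintro t ⟨htT, hts⟩ u hut
      refine ⟨hQ.1.2 t htT u hut, ?_⟩
      rcases hts with h | h
      · exact Or.inl (hut.trans h)
      · exact List.prefix_or_prefix_of_prefix hut h
  · rintro n u ⟨huT, hus⟩
    have hv : ∃ v, v ∈ T ∧ s <+: v ∧ u <+: v := by
      rcases hus with h | h
      · exact ⟨s, hs, List.prefix_refl s, h⟩
      · exact ⟨u, huT, h, List.prefix_refl u⟩
    obtain ⟨v, hvT, hsv, huv⟩ := hv
    obtain ⟨t, htT, hvt, hlt⟩ := hQ.2 n v hvT
    have hst : s <+: t := hsv.trans hvt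
    refine ⟨t, ⟨htT, Or.inr hst⟩, huv.trans hvt, ?_⟩
    rwa [succs_subAt hst]

lemma branches_subAt_subset {T : Set (List ℕ)} {s : List ℕ} :
    branches (subAt T s) ⊆ branches T ∩ {x | res x s.length = s} := by
  intro x hx
  refine ⟨fun n => (hx n).1, ?_⟩
  have := (hx s.length).2
  have hl : (res x s.length).length = s.length := by simp
  rcases this with h | h
  · exact h.eq_of_length hl
  · exact (h.eq_of_length hl.symm).symm

end St18


namespace St18

variable (norm : List ℕ → Set ℕ → ℝ) (T : Set (List ℕ))

/-- Adam's candidate at the `j`-th round of a stage, enumerating `succs T s`. -/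
noncomputable def cnd (s : List ℕ) (j : ℕ) : ℕ :=
  by classical exact if j ∈ succs T s then j else nxt T s

lemma cnd_mem {T : Set (List ℕ)} {s : List ℕ} (h : (succs T s).Nonempty) (j : ℕ) :
    cnd T s j ∈ succs T s := by
  rw [cnd]
  split
  · assumption
  · exact nxt_mem h

lemma cnd_self {T : Set (List ℕ)} {s : List ℕ} {c : ℕ} (h : c ∈ succs T s) :
    cnd T s c = c := by rw [cnd, if_pos h]

/-- Adam's prospective tail for candidate `c` at node `s`, stage `n`. -/
noncomputable def tl (n : ℕ) (s : List ℕ) (c : ℕ) : List ℕ :=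
  by classical exact
    if h : ∃ t, t ∈ T ∧ s ++ [c] <+: t ∧ (((n:ℕ) + 1 : ℕ) : ℝ) < norm t (succs T t)
    then h.choose.drop (s.length + 1) else []

lemma tl_spec {norm : List ℕ → Set ℕ → ℝ} {T : Set (List ℕ)} (hQ : Q0 norm T)
    {s : List ℕ} {c : ℕ} (hc : s ++ [c] ∈ T) (n : ℕ) :
    s ++ c :: tl norm T n s c ∈ T ∧
      (((n : ℕ) + 1 : ℕ) : ℝ) < norm (s ++ c :: tl norm T n s c)
        (succs T (s ++ c :: tl norm T n s c)) := by
  have hex : ∃ t, t ∈ T ∧ s ++ [c] <+: t ∧ (((n:ℕ) + 1 : ℕ) : ℝ) < norm t (succs T t) := by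
    obtain ⟨t, htT, hpre, hlt⟩ := hQ.2 (n + 1) (s ++ [c]) hc
    exact ⟨t, htT, hpre, hlt⟩
  rw [tl, dif_pos hex]
  obtain ⟨htT, hpre, hlt⟩ := hex.choose_spec
  obtain ⟨u, hu⟩ := hpre
  have hdrop : hex.choose.drop (s.length + 1) = u := by
    rw [← hu]
    have : (s ++ [c]).length = s.length + 1 := by simp
    rw [← this, List.drop_left]
  have hnode : s ++ c :: hex.choose.drop (s.length + 1) = hex.choose := by
    rw [hdrop, ← hu]; simp
  rw [hnode]
  exact ⟨htT, hlt⟩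

/-- Adam's first move: a node of norm `> 0`. -/
noncomputable def init : List ℕ :=
  by classical exact
    if h : ∃ t, t ∈ T ∧ ((0:ℕ) : ℝ) < norm t (succs T t) then h.choose else []

lemma init_spec {norm : List ℕ → Set ℕ → ℝ} {T : Set (List ℕ)} (hQ : Q0 norm T) :
    init norm T ∈ T ∧ ((0:ℕ) : ℝ) < norm (init norm T) (succs T (init norm T)) := by
  have hex : ∃ t, t ∈ T ∧ ((0:ℕ) : ℝ) < norm t (succs T t) := by
    obtain ⟨t, htT, _, hlt⟩ := hQ.2 0 [] (root_mem hQ.1)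
    exact ⟨t, htT, hlt⟩
  rw [init, dif_pos hex]
  exact hex.choose_spec

/-- Adam's move given the current state and the sub-round counter. -/
noncomputable def adamMove (st : GState) (j : ℕ) : AMove :=
  (cnd T st.node j, tl norm T st.stage st.node (cnd T st.node j))

variable (τ : History → AMove → Bool)

/-- The play against Eve's strategy `τ`: history, game state, and sub-round counter. -/
noncomputable def play : ℕ → History × GState × ℕ
  | 0 => ([], ⟨[], 0, ∅⟩, 0)
  | 1 => ([((0, init norm T), τ [] (0, init norm T))], ⟨init norm T, 0, ∅⟩, 0)
  | (k + 2) =>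
    let p := play (k + 1)
    let m := adamMove norm T p.2.1 p.2.2
    let b := τ p.1 m
    (p.1 ++ [(m, b)], step p.2.1 m b, if b then 0 else p.2.2 + 1)

/-- Adam's moves in the play. -/
noncomputable def pa : ℕ → AMove :=
  fun k => if k = 0 then (0, init norm T) else adamMove norm T (play norm T τ k).2.1 (play norm T τ k).2.2

/-- Eve's replies in the play. -/
noncomputable def pe : ℕ → Bool :=
  fun k => τ (play norm T τ k).1 (pa norm T τ k)

lemma hist_eq : ∀ k, hist (pa norm T τ) (pe norm T τ) k = (play norm T τ k).1 := by
  intro k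
  induction k with
  | zero => simp [hist, play]
  | succ k ih =>
    have hstep : hist (pa norm T τ) (pe norm T τ) (k+1)
        = hist (pa norm T τ) (pe norm T τ) k ++ [(pa norm T τ k, pe norm T τ k)] := by
      simp [hist, List.range_succ]
    rw [hstep, ih]
    cases k with
    | zero => simp [play, pa, pe, hist]
    | succ k => simp [play, pa, pe]

lemma followsE : FollowsE τ (pa norm T τ) (pe norm T τ) := by
  intro k
  rw [hist_eq]
  rfl

lemma gstate_eq : ∀ k, gstate (pa norm T τ) (pe norm T τ) k = (play norm T τ k).2.1 := by
  intro k
  induction k with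
  | zero => simp [gstate, play]
  | succ k ih =>
    cases k with
    | zero => simp [gstate, play, pa]
    | succ k =>
      show step (gstate _ _ (k+1)) (pa norm T τ (k+1)) (pe norm T τ (k+1)) = _
      rw [ih]
      simp [play, pa, pe]

end St18

namespace St18

variable (norm : List ℕ → Set ℕ → ℝ) (T : Set (List ℕ)) (τ : History → AMove → Bool)

lemma play_step (k : ℕ) :
    (play norm T τ (k + 2)).2 =
      (step (play norm T τ (k+1)).2.1 (pa norm T τ (k+1)) (pe norm T τ (k+1)),
        if pe norm T τ (k+1) then 0 else (play norm T τ (k+1)).2.2 + 1) := by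
  simp [play, pa, pe]

lemma inv (hQ : Q0 norm T) :
    ∀ k, 1 ≤ k → (play norm T τ k).2.1.node ∈ T ∧
      (((play norm T τ k).2.1.stage : ℕ) : ℝ) <
        norm (play norm T τ k).2.1.node (succs T (play norm T τ k).2.1.node) := by
  intro k hk
  induction k with
  | zero => omega
  | succ k ih =>
    cases k with
    | zero =>
      have := init_spec hQ
      simpa [play] using this
    | succ k =>
      obtain ⟨hT, hlt⟩ := ih (by omega)
      have hps := play_step norm T τ k
      set st := (play norm T τ (k+1)).2.1 with hst
      have hmem : cnd T st.node (play norm T τ (k+1)).2.2 ∈ succs T st.node :=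
        cnd_mem (succs_nonempty hQ _ hT) _
      have hpa : pa norm T τ (k+1) =
          (cnd T st.node (play norm T τ (k+1)).2.2,
            tl norm T st.stage st.node (cnd T st.node (play norm T τ (k+1)).2.2)) := by
        simp [pa, adamMove, hst]
      cases hb : pe norm T τ (k+1) with
      | false =>
        have : (play norm T τ (k+2)).2.1 = ⟨st.node, st.stage, st.cands ∪ {(pa norm T τ (k+1)).1}⟩ := by
          rw [show (play norm T τ (k+2)).2.1 = ((play norm T τ (k+2)).2).1 from rfl, hps]
          simp [step, hb]
        rw [this]
        exact ⟨hT, hlt⟩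
      | true =>
        have hspec := tl_spec hQ hmem st.stage
        have : (play norm T τ (k+2)).2.1 =
            ⟨st.node ++ (pa norm T τ (k+1)).1 :: (pa norm T τ (k+1)).2, st.stage + 1, ∅⟩ := by
          rw [show (play norm T τ (k+2)).2.1 = ((play norm T τ (k+2)).2).1 from rfl, hps]
          simp [step, hb]
        rw [this, hpa]
        refine ⟨hspec.1, ?_⟩
        have := hspec.2
        push_cast at this ⊢
        exact this

lemma node_prefix_succ (hQ : Q0 norm T) (k : ℕ) :
    (play norm T τ k).2.1.node <+: (play norm T τ (k+1)).2.1.node := by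
  cases k with
  | zero => simp [play]
  | succ k =>
    have hps := play_step norm T τ k
    rw [show (play norm T τ (k+2)).2.1 = ((play norm T τ (k+2)).2).1 from rfl, hps]
    cases hb : pe norm T τ (k+1) <;> simp [step, hb]

lemma node_prefix (hQ : Q0 norm T) {k m : ℕ} (h : k ≤ m) :
    (play norm T τ k).2.1.node <+: (play norm T τ m).2.1.node := by
  induction m with
  | zero => simp_all
  | succ m ih =>
    rcases Nat.lt_or_ge k (m+1) with h' | h'
    · exact (ih (by omega)).trans (node_prefix_succ norm T τ hQ m)
    · have : k = m + 1 := by omega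
      subst this; exact List.prefix_refl _

lemma stage_mono_succ (k : ℕ) :
    (play norm T τ k).2.1.stage ≤ (play norm T τ (k+1)).2.1.stage := by
  cases k with
  | zero => simp [play]
  | succ k =>
    have hps := play_step norm T τ k
    rw [show (play norm T τ (k+2)).2.1 = ((play norm T τ (k+2)).2).1 from rfl, hps]
    cases hb : pe norm T τ (k+1) <;> simp [step, hb]

lemma stage_mono {k m : ℕ} (h : k ≤ m) :
    (play norm T τ k).2.1.stage ≤ (play norm T τ m).2.1.stage := by
  induction m with
  | zero => simp_all
  | succ m ih =>
    rcases Nat.lt_or_ge k (m+1) with h' | h'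
    · exact (ih (by omega)).trans (stage_mono_succ norm T τ m)
    · have : k = m + 1 := by omega
      subst this; exact le_refl _

lemma stage_le_len (k : ℕ) :
    (play norm T τ k).2.1.stage ≤ (play norm T τ k).2.1.node.length := by
  induction k with
  | zero => simp [play]
  | succ k ih =>
    cases k with
    | zero => simp [play]
    | succ k =>
      have hps := play_step norm T τ k
      rw [show (play norm T τ (k+2)).2.1 = ((play norm T τ (k+2)).2).1 from rfl, hps]
      cases hb : pe norm T τ (k+1) <;> simp [step, hb] <;> omega

end St18

namespace St18

/-- Key lemma: if Eve has a winning strategy in `G₀(A)`, then every `Q0` tree has a branch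
outside `A`. -/
lemma game_lemma (norm : List ℕ → Set ℕ → ℝ)
    (hmono : ∀ t, ∀ X Y : Set ℕ, X ⊆ Y → norm t X ≤ norm t Y)
    (A : Set (ℕ → ℕ)) (τ : History → AMove → Bool)
    (hτ : ∀ a e, FollowsE τ a e → ¬ AdamWins norm A a e)
    (T : Set (List ℕ)) (hQ : Q0 norm T) :
    ∃ x ∈ branches T, x ∉ A := by
  classical
  have hnotwin := hτ _ _ (followsE norm T τ)
  have hgst := gstate_eq norm T τ
  -- dichotomy
  by_cases hacc : ∀ K, ∃ k, K ≤ k ∧ pe norm T τ k = true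
  · -- infinitely many acceptances: build the branch
    have hub : ∀ n : ℕ, ∃ k, n ≤ (play norm T τ k).2.1.stage := by
      intro n
      induction n with
      | zero => exact ⟨0, Nat.zero_le _⟩
      | succ n ih =>
        obtain ⟨k, hk⟩ := ih
        obtain ⟨k', hk', hacc'⟩ := hacc (max k 1)
        obtain ⟨k'', rfl⟩ : ∃ k'', k' = k'' + 1 := ⟨k' - 1, by omega⟩
        refine ⟨k'' + 2, ?_⟩
        have hps := play_step norm T τ k''
        rw [show (play norm T τ (k''+2)).2.1 = ((play norm T τ (k''+2)).2).1 from rfl, hps]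
        simp only [step, hacc', if_true]
        have : (play norm T τ k).2.1.stage ≤ (play norm T τ (k''+1)).2.1.stage :=
          stage_mono norm T τ (le_trans (le_max_left _ _) hk')
        omega
    have hub' : ∀ n : ℕ, ∃ k, n + 1 ≤ (play norm T τ k).2.1.stage := fun n => hub (n+1)
    choose pk hpk using hub'
    have hpk1 : ∀ n, 1 ≤ pk n := by
      intro n
      by_contra h
      have h0 : pk n = 0 := by omega
      have h1 := hpk n
      rw [h0] at h1
      simp [play] at h1
    have hlen : ∀ n, n < (play norm T τ (pk n)).2.1.node.length := by
      intro n
      have h1 := stage_le_len norm T τ (pk n)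
      have h2 := hpk n
      omega
    set x : ℕ → ℕ := fun n => (play norm T τ (pk n)).2.1.node.getD n 0 with hx
    -- agreement of entries
    have hagree : ∀ k n, n < (play norm T τ k).2.1.node.length →
        (play norm T τ k).2.1.node.getD n 0 = x n := by
      intro k n hn
      show _ = (play norm T τ (pk n)).2.1.node.getD n 0
      rcases le_total k (pk n) with h | h
      · have hpre := node_prefix norm T τ hQ h
        rw [List.getD_eq_getElem _ _ hn, List.getD_eq_getElem _ _ (hlen n)]
        exact hpre.getElem hn
      · have hpre := node_prefix norm T τ hQ h
        rw [List.getD_eq_getElem _ _ hn, List.getD_eq_getElem _ _ (hlen n)]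
        exact (hpre.getElem (hlen n)).symm
    -- every node is an initial segment of x
    have hprefix : ∀ k, prefixOf (play norm T τ k).2.1.node x := by
      intro k
      rw [prefixOf]
      apply eq_res_of_getElem
      intro i hi
      rw [← hagree k i hi, List.getD_eq_getElem _ _ hi]
    -- x is a branch of T
    have hbr : x ∈ branches T := by
      intro n
      have h2 : 1 ≤ pk n := hpk1 n
      have hmem : (play norm T τ (pk n)).2.1.node ∈ T := (inv norm T τ hQ _ h2).1
      have heq := hprefix (pk n)
      rw [prefixOf] at heq
      have hp : res x n <+: res x (play norm T τ (pk n)).2.1.node.length :=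
        res_prefix x (hlen n).le
      rw [← heq] at hp
      exact hQ.1.2 _ hmem _ hp
    refine ⟨x, hbr, ?_⟩
    intro hxA
    apply hnotwin
    right
    constructor
    · intro n
      obtain ⟨k, hk⟩ := hub n
      exact ⟨k, by rw [hgst k]; exact hk⟩
    · exact ⟨x, hxA, fun k => by rw [hgst k]; exact hprefix k⟩
  · -- finitely many acceptances: Adam wins via the norm condition
    push_neg at hacc
    obtain ⟨K, hK⟩ := hacc
    have hKex : ∃ K, ∀ k, K ≤ k → pe norm T τ k = false := by
      exact ⟨K, fun k hk => by simpa using hK k hk⟩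
    set B := Nat.find hKex with hB
    have hBspec : ∀ k, B ≤ k → pe norm T τ k = false := Nat.find_spec hKex
    set k₀ := max B 1 with hk₀
    have hk₀1 : 1 ≤ k₀ := le_max_right _ _
    have hall : ∀ k, k₀ ≤ k → pe norm T τ k = false := fun k hk =>
      hBspec k (le_trans (le_max_left _ _) hk)
    -- the sub-round counter at k₀ is 0
    have hj0 : (play norm T τ k₀).2.2 = 0 := by
      rcases Nat.lt_or_ge B 2 with hB2 | hB2
      · -- k₀ = 1
        have : k₀ = 1 := by omega
        rw [this]; rfl
      · have hkB : k₀ = B := by omega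
        obtain ⟨k', hk'⟩ : ∃ k', B = k' + 2 := ⟨B - 2, by omega⟩
        have hmin : ¬ (∀ k, (k' + 1) ≤ k → pe norm T τ k = false) :=
          Nat.find_min hKex (by omega)
        push_neg at hmin
        obtain ⟨k'', hk''1, hk''2⟩ := hmin
        have hk''B : k'' = k' + 1 := by
          by_contra h
          have : B ≤ k'' := by omega
          exact absurd (hBspec k'' this) (by simpa using hk''2)
        have hacc' : pe norm T τ (k' + 1) = true := by
          subst hk''B; simpa using hk''2
        have hps := play_step norm T τ k'
        rw [hkB, hk']
        rw [show (play norm T τ (k'+2)).2.2 = ((play norm T τ (k'+2)).2).2 from rfl, hps]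
        simp [hacc']
    -- state is frozen from k₀ on, and the counter enumerates
    have hfrozen : ∀ i,
        (play norm T τ (k₀ + i)).2.1.node = (play norm T τ k₀).2.1.node ∧
        (play norm T τ (k₀ + i)).2.1.stage = (play norm T τ k₀).2.1.stage ∧
        (play norm T τ (k₀ + i)).2.2 = i := by
      intro i
      induction i with
      | zero => simpa using hj0
      | succ i ih =>
        obtain ⟨hn, hs, hj⟩ := ih
        obtain ⟨k', hk'⟩ : ∃ k', k₀ + i = k' + 1 := ⟨k₀ + i - 1, by omega⟩
        have hrej : pe norm T τ (k' + 1) = false := by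
          rw [← hk']; exact hall _ (by omega)
        have hps := play_step norm T τ k'
        have h1 : k₀ + (i + 1) = k' + 2 := by omega
        rw [h1]
        rw [hps]
        simp only [step, hrej, if_false, Bool.false_eq_true]
        rw [← hk']
        exact ⟨hn, hs, by rw [hj]⟩
    -- every successor of the frozen node gets offered and rejected
    have hoffered : ∀ c ∈ succs T (play norm T τ k₀).2.1.node,
        c ∈ (play norm T τ (k₀ + c + 1)).2.1.cands := by
      intro c hc
      obtain ⟨k', hk'⟩ : ∃ k', k₀ + c = k' + 1 := ⟨k₀ + c - 1, by omega⟩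
      have hrej : pe norm T τ (k' + 1) = false := by
        rw [← hk']; exact hall _ (by omega)
      have hps := play_step norm T τ k'
      have h1 : k₀ + c + 1 = k' + 2 := by omega
      rw [h1, show (play norm T τ (k'+2)).2.1 = ((play norm T τ (k'+2)).2).1 from rfl, hps]
      simp only [step, hrej, if_false, Bool.false_eq_true]
      have hfz := hfrozen c
      have hpa1 : (pa norm T τ (k₀ + c)).1 = c := by
        have hne : ¬ (k₀ + c = 0) := by omega
        simp only [pa, adamMove, if_neg hne]
        rw [hfz.1, hfz.2.2, cnd_self hc]
      rw [hk'] at hpa1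
      exact Set.mem_union_right _ (Set.mem_singleton_iff.2 hpa1.symm)
    -- Adam wins by the norm condition: contradiction
    exfalso
    apply hnotwin
    left
    refine ⟨k₀, hk₀1, ?_, ?_⟩
    · intro k hk
      obtain ⟨i, rfl⟩ : ∃ i, k = k₀ + i := ⟨k - k₀, by omega⟩
      rw [hgst, hgst, (hfrozen i).2.1]
    · rw [hgst]
      have hlt := (inv norm T τ hQ k₀ hk₀1).2
      refine le_trans hlt.le (hmono _ _ _ ?_)
      intro c hc
      exact ⟨k₀ + c + 1, by omega, by rw [hgst]; exact hoffered c hc⟩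

end St18

namespace St18

lemma res_eq_of_mem_cylinder {x y : ℕ → ℕ} {n : ℕ} (h : y ∈ PiNat.cylinder x n) :
    res y n = res x n := by
  apply List.ext_getElem (by simp)
  intro i h1 h2
  rw [res_getElem y (by simpa using h1), res_getElem x (by simpa using h2)]
  exact h i (by simpa using h1)

lemma mem_cylinder_of_res_eq {x y : ℕ → ℕ} {n : ℕ} (h : res y n = res x n) :
    y ∈ PiNat.cylinder x n := by
  intro i hi
  have := congrArg (fun l => l.getD i 0) h
  simpa [res, List.getD_eq_getElem, List.getD, hi] using this

lemma isClosed_branches (T : Set (List ℕ)) : IsClosed (branches T) := by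
  rw [← isOpen_compl_iff, isOpen_iff_mem_nhds]
  intro x hx
  obtain ⟨n, hn⟩ := not_forall.1 hx
  refine Filter.mem_of_superset
    ((PiNat.isOpen_cylinder (fun _ : ℕ => ℕ) x n).mem_nhds (PiNat.self_mem_cylinder x n)) ?_
  intro y hy hybr
  exact hn (res_eq_of_mem_cylinder hy ▸ hybr n)

end St18


/-- If Eve has winning strategies in the games `G₀(Aₙ)` for each `n`, and each
`Aₙ` is `F_σ`, then no tree `T ∈ Q₀` satisfies `[T] ⊆ ⋃ₙ Aₙ`. -/
theorem countable_union_of_eve_win_Fsigma (norm : List ℕ → Set ℕ → ℝ)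
    (hnn : ∀ t X, 0 ≤ norm t X)
    (hmono : ∀ t, ∀ X Y : Set ℕ, X ⊆ Y → norm t X ≤ norm t Y)
    (hBorel : ∀ t : List ℕ, Measurable fun X : ℕ → Bool => norm t {n | X n = true})
    (A : ℕ → Set (ℕ → ℕ))
    (hFsigma : ∀ n, ∃ F : ℕ → Set (ℕ → ℕ), (∀ m, IsClosed (F m)) ∧ A n = ⋃ m, F m)
    (hwin : ∀ n, ∃ τ : History → AMove → Bool, ∀ a e, FollowsE τ a e → ¬ AdamWins norm (A n) a e) :
    ∀ T : Set (List ℕ), Q0 norm T → ¬ branches T ⊆ ⋃ n, A n := by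
  classical
  intro T hQT hsub
  open St18 in
  have hclosed : IsClosed (branches T) := St18.isClosed_branches T
  -- the branch space is a nonempty Baire space
  haveI : Nonempty (branches T) := by
    obtain ⟨hb, -⟩ := St18.exists_branch_through hQT (St18.root_mem hQT.1)
    exact ⟨⟨_, hb⟩⟩
  haveI := hclosed.completeSpace_coe
  haveI : (uniformity (branches T)).IsCountablyGenerated := by
    rw [uniformity_setCoe]; exact Filter.comap.isCountablyGenerated _ _
  haveI : BaireSpace (branches T) := inferInstance
  -- cover the branch space by the closed pieces
  set Fc : ℕ → ℕ → Set (ℕ → ℕ) := fun n => (hFsigma n).choose with hFc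
  have hFcl : ∀ n m, IsClosed (Fc n m) := fun n => (hFsigma n).choose_spec.1
  have hFA : ∀ n, A n = ⋃ m, Fc n m := fun n => (hFsigma n).choose_spec.2
  set f : ℕ × ℕ → Set (branches T) := fun p => Subtype.val ⁻¹' (Fc p.1 p.2) with hf
  have hfc : ∀ p, IsClosed (f p) := fun p => (hFcl p.1 p.2).preimage continuous_subtype_val
  have hcover : ⋃ p, f p = Set.univ := by
    ext z
    simp only [Set.mem_iUnion, Set.mem_univ, iff_true]
    have := hsub z.2
    rw [Set.mem_iUnion] at this
    obtain ⟨n, hn⟩ := this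
    rw [hFA n, Set.mem_iUnion] at hn
    obtain ⟨m, hm⟩ := hn
    exact ⟨⟨n, m⟩, hm⟩
  obtain ⟨p, hp⟩ := nonempty_interior_of_iUnion_of_closed hfc hcover
  obtain ⟨x, hx⟩ := hp
  -- extract a basic open cylinder inside the piece
  obtain ⟨U, hUopen, hUeq⟩ := isOpen_induced_iff.1 (isOpen_interior (s := f p))
  have hxU : (x : ℕ → ℕ) ∈ U := by rw [← hUeq] at hx; exact hx
  obtain ⟨V, hVbasis, hxV, hVU⟩ :=
    (PiNat.isTopologicalBasis_cylinders (fun _ : ℕ => ℕ)).isOpen_iff.1 hUopen _ hxU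
  obtain ⟨y, n, rfl⟩ := hVbasis
  have hcyl : PiNat.cylinder (x : ℕ → ℕ) n ⊆ U := by
    rwa [← PiNat.mem_cylinder_iff_eq.1 hxV] at hVU
  -- the subtree above `res x n`
  set s : List ℕ := res (x : ℕ → ℕ) n with hs
  have hsT : s ∈ T := x.2 n
  have hQ' : Q0 norm (St18.subAt T s) := St18.Q0_subAt hQT hsT
  have hbrsub : branches (St18.subAt T s) ⊆ A p.1 := by
    intro z hz
    obtain ⟨hzT, hzres⟩ := St18.branches_subAt_subset hz
    have hzcyl : z ∈ PiNat.cylinder (x : ℕ → ℕ) n := by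
      apply St18.mem_cylinder_of_res_eq
      rw [hs] at hzres
      simpa [hs] using hzres
    have hzU : z ∈ U := hcyl hzcyl
    have : (⟨z, hzT⟩ : branches T) ∈ Subtype.val ⁻¹' U := hzU
    rw [hUeq] at this
    have hzF : (⟨z, hzT⟩ : branches T) ∈ f p := interior_subset this
    rw [hFA p.1, Set.mem_iUnion]
    exact ⟨p.2, hzF⟩
  obtain ⟨τ, hτ⟩ := hwin p.1
  obtain ⟨w, hw1, hw2⟩ := St18.game_lemma norm hmono (A p.1) τ hτ _ hQ'
  exact hw2 (hbrsub hw1)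
end
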